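/- arXiv:1311.7232 — 4 statements merged into one kernel-verified Lean document; each statement's English description precedes it below -/
import Mathlib

section
/- Let (X,d) be a metric space, C ⊆ X nonempty, and T : C → 2^X a correspondence. If T satisfies condition (P), then T satisfies condition α. -/
open Metric

/-- Condition (P): for every closed ball `B` of `C` (with radius `r ≥ 0`) and any
sequence in `C` with `d(xₙ, B) → 0` and `d(xₙ, T xₙ) → 0`, there is a fixed point in `B`. -/
def ConditionP {X : Type*} [MetricSpace X] (C : Set X) (T : X → Set X) : Prop :=
  ∀ (c : X), c ∈ C → ∀ (r : ℝ), 0 ≤ r →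
    ∀ x : ℕ → X, (∀ n, x n ∈ C) →
      Filter.Tendsto (fun n => infDist (x n) (closedBall c r ∩ C)) Filter.atTop (nhds 0) →
      Filter.Tendsto (fun n => infDist (x n) (T (x n))) Filter.atTop (nhds 0) →
      ∃ x₀ ∈ closedBall c r ∩ C, x₀ ∈ T x₀

/-- Condition α: if `x₀ ∉ T x₀` then there is `r > 0` such that
`x₀ ∉ B(T x; r) ∩ B(x, r)` for every `x ∈ B(x₀, r) ∩ C`. -/
def ConditionAlpha {X : Type*} [MetricSpace X] (C : Set X) (T : X → Set X) : Prop :=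
  ∀ x₀ ∈ C, x₀ ∉ T x₀ →
    ∃ r > (0 : ℝ), ∀ x ∈ ball x₀ r ∩ C, ¬ (infDist x₀ (T x) < r ∧ dist x₀ x < r)

/-- Condition (P) implies condition α. -/
theorem conditionP_implies_conditionAlpha
    {X : Type*} [MetricSpace X] (C : Set X) (hC : C.Nonempty)
    (T : X → Set X) (hP : ConditionP C T) :
    ConditionAlpha C T := by
  intro x₀ hx₀C hx₀
  by_contra h
  push_neg at h
  have hseq : ∀ n : ℕ, ∃ y, y ∈ ball x₀ (1 / (n + 1)) ∧ y ∈ C ∧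
      infDist x₀ (T y) < 1 / (n + 1) ∧ dist x₀ y < 1 / (n + 1) := by
    intro n
    obtain ⟨y, ⟨hy1, hy2⟩, hy3, hy4⟩ := h (1 / (n + 1)) (by positivity)
    exact ⟨y, hy1, hy2, hy3, hy4⟩
  choose x hxball hxC hxinf hxdist using hseq
  have hsingle : closedBall x₀ 0 ∩ C = {x₀} := by
    rw [closedBall_zero]
    exact Set.inter_eq_self_of_subset_left (Set.singleton_subset_iff.mpr hx₀C)
  have htend : Filter.Tendsto (fun n : ℕ => (1 : ℝ) / (n + 1)) Filter.atTop (nhds 0) :=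
    tendsto_one_div_add_atTop_nhds_zero_nat
  have h1 : Filter.Tendsto (fun n => infDist (x n) (closedBall x₀ 0 ∩ C))
      Filter.atTop (nhds 0) := by
    rw [hsingle]
    simp only [infDist_singleton]
    refine squeeze_zero (fun n => dist_nonneg) (fun n => ?_) htend
    rw [dist_comm]
    exact (hxdist n).le
  have h2 : Filter.Tendsto (fun n => infDist (x n) (T (x n)))
      Filter.atTop (nhds 0) := by
    have : Filter.Tendsto (fun n : ℕ => (1 : ℝ) / (n + 1) + 1 / (n + 1))
        Filter.atTop (nhds 0) := by
      simpa using htend.add htend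
    refine squeeze_zero (fun n => infDist_nonneg) (fun n => ?_) this
    calc infDist (x n) (T (x n)) ≤ infDist x₀ (T (x n)) + dist (x n) x₀ :=
          infDist_le_infDist_add_dist
      _ ≤ 1 / (n + 1) + 1 / (n + 1) := by
          rw [dist_comm]
          exact add_le_add (hxinf n).le (hxdist n).le
  obtain ⟨y, hy, hfy⟩ := hP x₀ hx₀C 0 le_rfl x hxC h1 h2
  rw [hsingle, Set.mem_singleton_iff] at hy
  exact hx₀ (hy ▸ hfy)
end

section
/- Let (Ω, F) be a measurable space, C a compact metric space, and for each n ∈ ℕ let ξₙ : Ω → C be a measurable map. Suppose T : Ω × C → 2^C is such that for each fixed ω, d(ξₙ(ω), T(ω, ξₙ(ω))) → 0. Then there exists a measurable map ξ₀ : Ω → C such that for each ω, ξ₀(ω) is a limit of a subsequence of {ξₙ(ω)}. Moreover, if additionally for each ω the set F(ω) = {x ∈ C : x ∈ T(ω,x)} is closed and every limit point x of any sequence {xₙ} with d(xₙ, T(ω,xₙ)) → 0 belongs to F(ω), then ξ₀(ω) ∈ T(ω, ξ₀(ω)) for all ω. -/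
open Metric

namespace RFPAux
open Filter Topology
set_option linter.unusedSectionVars false

variable {Ω : Type*} {C : Type*} [MetricSpace C] [CompactSpace C]

/-- `InfP ξ ω A` : infinitely many `n` have `ξ n ω ∈ A`. -/
def InfP (ξ : ℕ → Ω → C) (ω : Ω) (A : Set C) : Prop :=
  ∀ N : ℕ, ∃ n : ℕ, N ≤ n ∧ ξ n ω ∈ A

lemma infP_univ (ξ : ℕ → Ω → C) (ω : Ω) : InfP ξ ω Set.univ :=
  fun N => ⟨N, le_rfl, trivial⟩

open Filter in
lemma key_step (ξ : ℕ → Ω → C) {u : ℕ → C} (hu : DenseRange u) (ω : Ω)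
    (S : Set C) (hS : IsClosed S) (hI : InfP ξ ω S) {ε : ℝ} (hε : 0 < ε) :
    ∃ i, InfP ξ ω (S ∩ closedBall (u i) ε) := by
  have hfreq : ∃ᶠ n in atTop, ξ n ω ∈ S := by
    rw [frequently_atTop]
    intro N; obtain ⟨n, hn, hmem⟩ := hI N; exact ⟨n, hn, hmem⟩
  set g : ℕ → C := fun n => ξ n ω with hg
  set f : Filter C := Filter.map g atTop ⊓ 𝓟 S with hf
  have h1 : (atTop ⊓ 𝓟 (g ⁻¹' S)).NeBot := frequently_iff_neBot.mp hfreq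
  have hle : Filter.map g (atTop ⊓ 𝓟 (g ⁻¹' S)) ≤ f := by
    refine le_inf (Filter.map_mono inf_le_left) ?_
    refine le_trans (Filter.map_mono inf_le_right) ?_
    rw [Filter.map_principal]
    exact Filter.principal_mono.mpr (Set.image_preimage_subset g S)
  have hne : f.NeBot := Filter.neBot_of_le hle
  obtain ⟨x, hxS, hx⟩ := hS.isCompact.exists_clusterPt (f := f) inf_le_right
  obtain ⟨i, hi⟩ := hu.exists_dist_lt x (half_pos hε)
  refine ⟨i, ?_⟩
  have hball : (𝓝 x ⊓ f).NeBot := hx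
  have hle2 : 𝓝 x ⊓ f ≤ f ⊓ 𝓟 (ball x (ε / 2)) :=
    le_inf inf_le_right (le_trans inf_le_left
      (le_principal_iff.mpr (ball_mem_nhds x (half_pos hε))))
  have hne2 : (f ⊓ 𝓟 (ball x (ε / 2))).NeBot := Filter.neBot_of_le hle2
  have hfr : ∃ᶠ y in f, y ∈ ball x (ε / 2) := by
    rw [frequently_iff_neBot]
    exact hne2
  rw [hf] at hfr
  have hfr2 : ∃ᶠ y in Filter.map g atTop, y ∈ S ∧ y ∈ ball x (ε / 2) := by
    have := frequently_inf_principal.mp hfr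
    exact this.mono (fun y hy => ⟨hy.1, hy.2⟩)
  have hfr3 : ∃ᶠ n in atTop, g n ∈ S ∧ g n ∈ ball x (ε / 2) :=
    Filter.frequently_map.mp hfr2
  intro N
  obtain ⟨n, hnN, hnS, hnb⟩ := (frequently_atTop.mp hfr3) N
  refine ⟨n, hnN, hnS, ?_⟩
  rw [mem_closedBall]
  have h1 : dist (g n) x < ε / 2 := mem_ball.mp hnb
  have h2 : dist x (u i) < ε / 2 := hi
  calc dist (g n) (u i) ≤ dist (g n) x + dist x (u i) := dist_triangle _ _ _
    _ ≤ ε / 2 + ε / 2 := by linarith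
    _ = ε := by ring

open scoped Classical in
/-- Nested sequence of closed sets, each followed infinitely often. -/
noncomputable def F (ξ : ℕ → Ω → C) {u : ℕ → C} (hu : DenseRange u) (ω : Ω) :
    ℕ → {S : Set C // IsClosed S ∧ InfP ξ ω S}
  | 0 => ⟨Set.univ, isClosed_univ, infP_univ ξ ω⟩
  | (m + 1) =>
    ⟨(F ξ hu ω m).1 ∩ closedBall
        (u (Nat.find (key_step ξ hu ω (F ξ hu ω m).1 (F ξ hu ω m).2.1 (F ξ hu ω m).2.2
          (pow_pos (one_half_pos (α := ℝ)) m)))) ((1 / 2) ^ m),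
      (F ξ hu ω m).2.1.inter Metric.isClosed_closedBall,
      Nat.find_spec (key_step ξ hu ω (F ξ hu ω m).1 (F ξ hu ω m).2.1 (F ξ hu ω m).2.2
        (pow_pos (one_half_pos (α := ℝ)) m))⟩

open scoped Classical in
/-- Index of the ball chosen at stage `m`. -/
noncomputable def idx (ξ : ℕ → Ω → C) {u : ℕ → C} (hu : DenseRange u) (ω : Ω) (m : ℕ) : ℕ :=
  Nat.find (key_step ξ hu ω (F ξ hu ω m).1 (F ξ hu ω m).2.1 (F ξ hu ω m).2.2
    (pow_pos (one_half_pos (α := ℝ)) m))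

lemma F_succ (ξ : ℕ → Ω → C) {u : ℕ → C} (hu : DenseRange u) (ω : Ω) (m : ℕ) :
    (F ξ hu ω (m + 1)).1 =
      (F ξ hu ω m).1 ∩ closedBall (u (idx ξ hu ω m)) ((1 / 2) ^ m) := by
  rfl

end RFPAux

open RFPAux Filter Topology in
theorem aux_selection
    {Ω : Type*} [MeasurableSpace Ω]
    {C : Type*} [MetricSpace C] [CompactSpace C] [MeasurableSpace C] [BorelSpace C]
    [Nonempty C]
    (ξ : ℕ → Ω → C) (hmeas : ∀ n, Measurable (ξ n)) :
    ∃ ξ₀ : Ω → C, Measurable ξ₀ ∧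
      ∀ ω : Ω, ∃ φ : ℕ → ℕ, StrictMono φ ∧
        Tendsto (fun k => ξ (φ k) ω) atTop (𝓝 (ξ₀ ω)) := by
  classical
  obtain ⟨u, hu⟩ : ∃ u : ℕ → C, DenseRange u :=
    ⟨TopologicalSpace.denseSeq C, TopologicalSpace.denseRange_denseSeq C⟩
  set v : Ω → ℕ → C := fun ω m => u (idx ξ hu ω m) with hv
  -- basic containments
  have hsub : ∀ ω m, (F ξ hu ω (m + 1)).1 ⊆ closedBall (v ω m) ((1 / 2) ^ m) := by
    intro ω m
    rw [F_succ]
    exact Set.inter_subset_right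
  have hmono : ∀ ω m, (F ξ hu ω (m + 1)).1 ⊆ (F ξ hu ω m).1 := by
    intro ω m
    rw [F_succ]
    exact Set.inter_subset_left
  -- Cauchy
  have hC : ∀ ω, CauchySeq (v ω) := by
    intro ω
    apply cauchySeq_of_le_geometric (1 / 2) 2 (by norm_num)
    intro m
    obtain ⟨n, -, hn⟩ := (F ξ hu ω (m + 2)).2.2 0
    have h1 : ξ n ω ∈ closedBall (v ω (m + 1)) ((1 / 2) ^ (m + 1)) := hsub ω (m + 1) hn
    have h2 : ξ n ω ∈ closedBall (v ω m) ((1 / 2) ^ m) := hsub ω m (hmono ω (m + 1) hn)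
    have hp : (0 : ℝ) < (1 / 2 : ℝ) ^ m := pow_pos one_half_pos m
    calc dist (v ω m) (v ω (m + 1))
        ≤ dist (v ω m) (ξ n ω) + dist (ξ n ω) (v ω (m + 1)) := dist_triangle _ _ _
      _ ≤ (1 / 2) ^ m + (1 / 2) ^ (m + 1) := by
          have := mem_closedBall.mp h1
          have := mem_closedBall.mp h2
          rw [dist_comm (v ω m)]
          gcongr
      _ ≤ 2 * (1 / 2) ^ m := by rw [pow_succ]; nlinarith
  choose ξ₀ hξ₀ using fun ω => cauchySeq_tendsto_of_complete (hC ω)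
  -- measurability of idx, by induction on membership events
  have hA : ∀ m : ℕ, (∀ n, MeasurableSet {ω | ξ n ω ∈ (F ξ hu ω m).1}) →
      Measurable (fun ω => idx ξ hu ω m) := by
    intro m hE
    have hQ : ∀ i : ℕ, MeasurableSet
        {ω | InfP ξ ω ((F ξ hu ω m).1 ∩ closedBall (u i) ((1 / 2) ^ m))} := by
      intro i
      have : {ω | InfP ξ ω ((F ξ hu ω m).1 ∩ closedBall (u i) ((1 / 2) ^ m))} =
          ⋂ N : ℕ, ⋃ n : ℕ, ⋃ _ : N ≤ n,
            ({ω | ξ n ω ∈ (F ξ hu ω m).1} ∩ ξ n ⁻¹' closedBall (u i) ((1 / 2) ^ m)) := by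
        ext ω
        simp only [Set.mem_setOf_eq, Set.mem_iInter, Set.mem_iUnion, Set.mem_inter_iff,
          Set.mem_preimage, InfP]
        constructor
        · intro h N; obtain ⟨n, hn, h1, h2⟩ := h N; exact ⟨n, hn, h1, h2⟩
        · intro h N; obtain ⟨n, hn, h1, h2⟩ := h N; exact ⟨n, hn, h1, h2⟩
      rw [this]
      exact MeasurableSet.iInter fun N => MeasurableSet.iUnion fun n =>
        MeasurableSet.iUnion fun _ => (hE n).inter ((hmeas n) measurableSet_closedBall)
    apply measurable_to_countable'
    intro i
    have : (fun ω => idx ξ hu ω m) ⁻¹' {i} =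
        {ω | InfP ξ ω ((F ξ hu ω m).1 ∩ closedBall (u i) ((1 / 2) ^ m))} ∩
          ⋂ j : ℕ, ⋂ _ : j < i,
            {ω | InfP ξ ω ((F ξ hu ω m).1 ∩ closedBall (u j) ((1 / 2) ^ m))}ᶜ := by
      ext ω
      simp only [Set.mem_preimage, Set.mem_singleton_iff, idx, Nat.find_eq_iff,
        Set.mem_inter_iff, Set.mem_setOf_eq, Set.mem_iInter, Set.mem_compl_iff]
    rw [this]
    exact (hQ i).inter (MeasurableSet.iInter fun j => MeasurableSet.iInter fun _ =>
      (hQ j).compl)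
  have hEm : ∀ m : ℕ, (∀ n, MeasurableSet {ω | ξ n ω ∈ (F ξ hu ω m).1}) ∧
      Measurable (fun ω => idx ξ hu ω m) := by
    intro m
    induction m with
    | zero =>
        have h0 : ∀ n, MeasurableSet {ω | ξ n ω ∈ (F ξ hu ω 0).1} := by
          intro n
          have : {ω | ξ n ω ∈ (F ξ hu ω 0).1} = Set.univ := by
            ext ω; simp [F]
          exact this ▸ MeasurableSet.univ
        exact ⟨h0, hA 0 h0⟩
    | succ m ih =>
        have hstep : ∀ n, MeasurableSet {ω | ξ n ω ∈ (F ξ hu ω (m + 1)).1} := by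
          intro n
          have heq : {ω | ξ n ω ∈ (F ξ hu ω (m + 1)).1} =
              {ω | ξ n ω ∈ (F ξ hu ω m).1} ∩
                ⋃ i : ℕ, ((fun ω => idx ξ hu ω m) ⁻¹' {i} ∩
                  ξ n ⁻¹' closedBall (u i) ((1 / 2) ^ m)) := by
            ext ω
            simp only [Set.mem_setOf_eq, F_succ, Set.mem_inter_iff, Set.mem_iUnion,
              Set.mem_preimage, Set.mem_singleton_iff]
            constructor
            · rintro ⟨h1, h2⟩; exact ⟨h1, idx ξ hu ω m, rfl, h2⟩
            · rintro ⟨h1, i, hi, h2⟩; exact ⟨h1, by rwa [hi]⟩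
          rw [heq]
          exact (ih.1 n).inter (MeasurableSet.iUnion fun i =>
            (ih.2 (MeasurableSet.singleton i)).inter
              ((hmeas n) measurableSet_closedBall))
        exact ⟨hstep, hA (m + 1) hstep⟩
  have hvm : ∀ m, Measurable (fun ω => v ω m) := fun m =>
    measurable_from_top.comp (hEm m).2
  have hmeasξ₀ : Measurable ξ₀ := by
    refine measurable_of_tendsto_metrizable' (f := fun m ω => v ω m) atTop hvm ?_
    rw [tendsto_pi_nhds]
    exact hξ₀
  refine ⟨ξ₀, hmeasξ₀, ?_⟩
  intro ω
  -- extract the subsequence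
  have hInf : ∀ k N : ℕ, ∃ n, N ≤ n ∧ ξ n ω ∈ (F ξ hu ω (k + 1)).1 :=
    fun k N => (F ξ hu ω (k + 1)).2.2 N
  choose f hf1 hf2 using hInf
  set φ : ℕ → ℕ := fun k => Nat.rec (f 0 0) (fun k p => f (k + 1) (p + 1)) k with hφdef
  have hφ0 : φ 0 = f 0 0 := rfl
  have hφs : ∀ k, φ (k + 1) = f (k + 1) (φ k + 1) := fun k => rfl
  have hφmono : StrictMono φ := by
    apply strictMono_nat_of_lt_succ
    intro k
    rw [hφs k]
    exact lt_of_lt_of_le (Nat.lt_succ_self _) (hf1 (k + 1) (φ k + 1))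
  have hφmem : ∀ k, ξ (φ k) ω ∈ (F ξ hu ω (k + 1)).1 := by
    intro k
    cases k with
    | zero => exact hf2 0 0
    | succ k => rw [hφs k]; exact hf2 (k + 1) (φ k + 1)
  refine ⟨φ, hφmono, ?_⟩
  rw [tendsto_iff_dist_tendsto_zero]
  apply squeeze_zero (fun k => dist_nonneg)
    (g := fun k => (1 / 2 : ℝ) ^ k + dist (v ω k) (ξ₀ ω))
  · intro k
    have h1 : dist (ξ (φ k) ω) (v ω k) ≤ (1 / 2) ^ k :=
      mem_closedBall.mp (hsub ω k (hφmem k))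
    calc dist (ξ (φ k) ω) (ξ₀ ω)
        ≤ dist (ξ (φ k) ω) (v ω k) + dist (v ω k) (ξ₀ ω) := dist_triangle _ _ _
      _ ≤ (1 / 2) ^ k + dist (v ω k) (ξ₀ ω) := by linarith
  · have h1 : Tendsto (fun k => ((1 : ℝ) / 2) ^ k) atTop (𝓝 0) :=
      tendsto_pow_atTop_nhds_zero_of_lt_one (by norm_num) (by norm_num)
    have h2 : Tendsto (fun k => dist (v ω k) (ξ₀ ω)) atTop (𝓝 0) :=
      tendsto_iff_dist_tendsto_zero.mp (hξ₀ ω)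
    simpa using h1.add h2

/-- The measurable limiting-selection step: from measurable approximate fixed point
selections on a compact metric space one extracts a measurable map which is, for each
`ω`, a subsequential limit; it is a random fixed point under a closedness condition on
approximate fixed point sequences. -/
theorem measurable_subsequential_limit_random_fixed_point
    {Ω : Type*} [MeasurableSpace Ω]
    {C : Type*} [MetricSpace C] [CompactSpace C] [MeasurableSpace C] [BorelSpace C]
    (ξ : ℕ → Ω → C) (hmeas : ∀ n, Measurable (ξ n))
    (T : Ω → C → Set C)
    (happrox : ∀ ω : Ω, Filter.Tendsto
      (fun n => infDist (ξ n ω) (T ω (ξ n ω))) Filter.atTop (nhds 0)) :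
    ∃ ξ₀ : Ω → C, Measurable ξ₀ ∧
      (∀ ω : Ω, ∃ φ : ℕ → ℕ, StrictMono φ ∧
        Filter.Tendsto (fun k => ξ (φ k) ω) Filter.atTop (nhds (ξ₀ ω))) ∧
      ((∀ ω : Ω, IsClosed {x : C | x ∈ T ω x} ∧
          ∀ (x : ℕ → C) (x₀ : C), Filter.Tendsto x Filter.atTop (nhds x₀) →
            Filter.Tendsto (fun n => infDist (x n) (T ω (x n))) Filter.atTop (nhds 0) →
            x₀ ∈ T ω x₀) →
        ∀ ω : Ω, ξ₀ ω ∈ T ω (ξ₀ ω)) := by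
  by_cases hCne : Nonempty C
  · obtain ⟨ξ₀, hm, hsub⟩ := aux_selection ξ hmeas
    refine ⟨ξ₀, hm, hsub, ?_⟩
    intro hcl ω
    obtain ⟨φ, hφ, htend⟩ := hsub ω
    exact (hcl ω).2 (fun k => ξ (φ k) ω) (ξ₀ ω) htend
      ((happrox ω).comp hφ.tendsto_atTop)
  · have hΩ : IsEmpty Ω := ⟨fun ω => hCne ⟨ξ 0 ω⟩⟩
    exact ⟨ξ 0, hmeas 0, fun ω => isEmptyElim ω, fun _ ω => isEmptyElim ω⟩
end

section
/- Let C be a compact convex nonempty subset of a metrizable locally convex topological vector space and T : C → 2^C a correspondence with nonempty convex values having the local intersection property. Then T has a fixed point. -/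
open Finset

namespace SpernerAux

/-- Vertices at subdivision level `m`. -/
def V (n : ℕ) : ℕ → Type
  | 0 => Fin n
  | m+1 => Finset (V n m)

instance instDecEqV (n : ℕ) : ∀ m, DecidableEq (V n m)
  | 0 => inferInstanceAs (DecidableEq (Fin n))
  | m+1 => letI := instDecEqV n m; inferInstanceAs (DecidableEq (Finset (V n m)))

instance instFintypeV (n : ℕ) : ∀ m, Fintype (V n m)
  | 0 => inferInstanceAs (Fintype (Fin n))
  | m+1 => letI := instDecEqV n m; letI := instFintypeV n m
           inferInstanceAs (Fintype (Finset (V n m)))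

/-- A level `m+1` vertex *is* a finset of level-`m` vertices. -/
def down {n m : ℕ} (c : V n (m+1)) : Finset (V n m) := c

def up {n m : ℕ} (c : Finset (V n m)) : V n (m+1) := c

@[simp] lemma down_up {n m : ℕ} (c : Finset (V n m)) : down (up c) = c := rfl
@[simp] lemma up_down {n m : ℕ} (c : V n (m+1)) : up (down c) = c := rfl

lemma down_injective {n m : ℕ} : Function.Injective (down (n := n) (m := m)) :=
  fun _ _ h => h

/-- Support of a vertex: the set of coordinates of the original simplex involved. -/
def vsupp (n : ℕ) : ∀ m, V n m → Finset (Fin n)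
  | 0, i => {i}
  | m+1, c => (down c).sup (vsupp n m)

/-- Cells of the level-`m` subdivision: chains of cells of level `m-1`. -/
def IsCell (n : ℕ) : ∀ m, Finset (V n m) → Prop
  | 0, c => c.Nonempty
  | m+1, c => c.Nonempty ∧ (∀ x ∈ c, IsCell n m (down x)) ∧
      ∀ x ∈ c, ∀ y ∈ c, down x ⊆ down y ∨ down y ⊆ down x

def IsVert (n : ℕ) : ∀ m, V n m → Prop
  | 0, _ => True
  | m+1, v => IsCell n m (down v)

lemma isCell_zero {n : ℕ} {c : Finset (V n 0)} : IsCell n 0 c ↔ c.Nonempty := Iff.rfl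

lemma isCell_succ {n m : ℕ} {c : Finset (V n (m+1))} :
    IsCell n (m+1) c ↔ c.Nonempty ∧ (∀ x ∈ c, IsCell n m (down x)) ∧
      ∀ x ∈ c, ∀ y ∈ c, down x ⊆ down y ∨ down y ⊆ down x := Iff.rfl

lemma vsupp_succ {n m : ℕ} (c : V n (m+1)) :
    vsupp n (m+1) c = (down c).sup (vsupp n m) := rfl

/-- `csupp` of a finset of level-`m` vertices (as a potential cell). -/
def csupp {n m : ℕ} (c : Finset (V n m)) : Finset (Fin n) := c.sup (vsupp n m)

lemma csupp_eq_vsupp_up {n m : ℕ} (c : Finset (V n m)) :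
    csupp c = vsupp n (m+1) (up c) := rfl

lemma vsupp_mono {n m : ℕ} {c d : Finset (V n m)} (h : c ⊆ d) : csupp c ⊆ csupp d :=
  Finset.le_iff_subset.mp (Finset.sup_mono h)

lemma mem_csupp {n m : ℕ} {c : Finset (V n m)} {v : V n m} (hv : v ∈ c) :
    vsupp n m v ⊆ csupp c := Finset.le_iff_subset.mp (Finset.le_sup hv)

end SpernerAux

namespace SpernerAux

lemma IsCell.nonempty {n m : ℕ} {c : Finset (V n m)} (h : IsCell n m c) : c.Nonempty := by
  cases m with
  | zero => exact h
  | succ m => exact h.1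

lemma IsCell.mem_isCell {n m : ℕ} {c : Finset (V n (m+1))} (h : IsCell n (m+1) c)
    {x : V n (m+1)} (hx : x ∈ c) : IsCell n m (down x) := h.2.1 x hx

/-- cells are downward closed under nonempty subsets -/
lemma IsCell.subset {n m : ℕ} {c d : Finset (V n m)} (h : IsCell n m c)
    (hdc : d ⊆ c) (hd : d.Nonempty) : IsCell n m d := by
  cases m with
  | zero => exact hd
  | succ m => exact ⟨hd, fun x hx => h.2.1 x (hdc hx), fun x hx y hy => h.2.2 x (hdc hx) y (hdc hy)⟩

lemma IsCell.vert_mem {n m : ℕ} {c : Finset (V n m)} (h : IsCell n m c)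
    {v : V n m} (hv : v ∈ c) : IsVert n m v := by
  cases m with
  | zero => trivial
  | succ m => exact h.2.1 v hv

lemma IsVert.vsupp_nonempty {n : ℕ} : ∀ {m : ℕ} {v : V n m}, IsVert n m v →
    (vsupp n m v).Nonempty := by
  intro m
  induction m with
  | zero => intro v _; exact ⟨v, by simp only [vsupp]; exact Finset.mem_singleton_self _⟩
  | succ m ih =>
      intro v hv
      obtain ⟨x, hx⟩ := hv.nonempty
      obtain ⟨i, hi⟩ := ih (hv.vert_mem hx)
      exact ⟨i, mem_csupp hx hi⟩

lemma csupp_nonempty {n m : ℕ} {c : Finset (V n m)} (h : IsCell n m c) :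
    (csupp c).Nonempty := by
  obtain ⟨v, hv⟩ := h.nonempty
  obtain ⟨i, hi⟩ := (h.vert_mem hv).vsupp_nonempty
  exact ⟨i, mem_csupp hv hi⟩

/-- In a cell (a chain), distinct elements have distinct cardinalities. -/
lemma IsCell.card_injOn {n m : ℕ} {c : Finset (V n (m+1))} (h : IsCell n (m+1) c) :
    Set.InjOn (fun x : V n (m+1) => (down x).card) c := by
  intro x hx y hy hxy
  rcases h.2.2 x hx y hy with hs | hs
  · exact down_injective (Finset.eq_of_subset_of_card_le hs (le_of_eq hxy.symm))
  · exact down_injective (Finset.eq_of_subset_of_card_le hs (le_of_eq hxy)).symm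

/-- A chain has a maximal element containing all others. -/
lemma IsCell.exists_top {n m : ℕ} {c : Finset (V n (m+1))} (h : IsCell n (m+1) c) :
    ∃ t ∈ c, ∀ x ∈ c, down x ⊆ down t := by
  obtain ⟨t, ht, htmax⟩ := c.exists_max_image (fun x => (down x).card) h.1
  refine ⟨t, ht, fun x hx => ?_⟩
  rcases h.2.2 x hx t ht with hs | hs
  · exact hs
  · exact (Finset.eq_of_subset_of_card_le hs (htmax x hx)) ▸ Finset.Subset.refl _

/-- Key cardinality bound: a cell has at most `csupp` many elements. -/
lemma IsCell.card_le {n : ℕ} : ∀ {m : ℕ} {c : Finset (V n m)}, IsCell n m c →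
    c.card ≤ (csupp c).card := by
  intro m
  induction m with
  | zero =>
      intro c _
      have : csupp c = c.image (fun i => i) := by
        ext j; simp [csupp, vsupp, Finset.mem_sup]
        exact ⟨fun ⟨i, hi, hj⟩ => by cases Finset.mem_singleton.mp hj; exact hi,
          fun hj => ⟨j, hj, Finset.mem_singleton_self _⟩⟩
      rw [this]
      simp [Finset.card_image_of_injective _ Function.injective_id]
      exact Nat.le_refl _
  | succ m ih =>
      intro c hc
      obtain ⟨t, htc, ht⟩ := hc.exists_top
      -- cards of elements are distinct, between 1 and (down t).card
      have hinj : Set.InjOn (fun x : V n (m+1) => (down x).card) c := hc.card_injOn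
      have himg : c.card = (c.image (fun x => (down x).card)).card :=
        (Finset.card_image_of_injOn hinj).symm
      have hsub : c.image (fun x => (down x).card) ⊆ Finset.Icc 1 ((down t).card) := by
        intro k hk
        simp only [Finset.mem_image] at hk
        obtain ⟨x, hx, rfl⟩ := hk
        refine Finset.mem_Icc.mpr ⟨Finset.card_pos.mpr (hc.mem_isCell hx).nonempty, ?_⟩
        exact Finset.card_le_card (ht x hx)
      have h1 : c.card ≤ (down t).card := by
        calc c.card = _ := himg
        _ ≤ (Finset.Icc 1 ((down t).card)).card := Finset.card_le_card hsub
        _ = (down t).card := by simp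
      have h2 : (down t).card ≤ (csupp (down t)).card := ih (hc.mem_isCell htc)
      refine h1.trans (h2.trans (Finset.card_le_card ?_))
      -- csupp (down t) = vsupp of t ⊆ csupp c
      exact mem_csupp htc

open Classical in
/-- Rooms over a face `s`: cells with support inside `s` of full dimension. -/
noncomputable def rooms (n m : ℕ) (s : Finset (Fin n)) : Finset (Finset (V n m)) :=
  Finset.univ.filter (fun c => IsCell n m c ∧ csupp c ⊆ s ∧ c.card = s.card)

lemma mem_rooms {n m : ℕ} {s : Finset (Fin n)} {c : Finset (V n m)} :
    c ∈ rooms n m s ↔ IsCell n m c ∧ csupp c ⊆ s ∧ c.card = s.card := by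
  classical
  simp [rooms]

lemma rooms_csupp {n m : ℕ} {s : Finset (Fin n)} {c : Finset (V n m)}
    (h : c ∈ rooms n m s) : csupp c = s := by
  rw [mem_rooms] at h
  refine Finset.eq_of_subset_of_card_le h.2.1 ?_
  calc s.card = c.card := h.2.2.symm
    _ ≤ (csupp c).card := h.1.card_le

lemma csupp_zero {n : ℕ} (c : Finset (V n 0)) : csupp c = c := by
  ext j
  simp only [csupp, Finset.mem_sup]
  constructor
  · rintro ⟨v, hv, hj⟩
    have : j = v := by simp only [vsupp] at hj; exact Finset.mem_singleton.mp hj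
    exact this ▸ hv
  · intro hj
    exact ⟨j, hj, by simp only [vsupp]; exact Finset.mem_singleton_self _⟩

lemma rooms_zero {n : ℕ} {s : Finset (Fin n)} (hs : s.Nonempty) :
    rooms n 0 s = {(id s : Finset (V n 0))} := by
  ext c
  rw [mem_rooms]
  simp only [Finset.mem_singleton]
  constructor
  · rintro ⟨hc, hsub, hcard⟩
    rw [csupp_zero] at hsub
    exact Finset.eq_of_subset_of_card_le hsub (le_of_eq hcard.symm)
  · rintro rfl
    refine ⟨hs, ?_, rfl⟩
    exact (csupp_zero _).le

open Classical in
lemma wall_count {n : ℕ} : ∀ (m : ℕ) {s : Finset (Fin n)} {w : Finset (V n m)},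
    IsCell n m w → csupp w ⊆ s → w.card + 1 = s.card →
    ((rooms n m s).filter (fun R => w ⊆ R)).card = if csupp w = s then 2 else 1 := by
  intro m
  induction m with
  | zero =>
      intro s w hw hsub hcard
      have hs : s.Nonempty := by
        refine Finset.card_pos.mp ?_
        omega
      have hne : csupp w ≠ s := by
        intro h
        rw [csupp_zero] at h
        subst h
        exact absurd hcard (Nat.succ_ne_self _)
      rw [if_neg hne, rooms_zero hs]
      rw [Finset.filter_singleton, if_pos (by rw [csupp_zero] at hsub; exact hsub)]
      simp
  | succ m ih =>
      intro s w hw hsub hcard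
      classical
      have hd1 : 1 ≤ w.card := Finset.card_pos.mpr hw.nonempty
      -- the set of cardinalities appearing in the chain w
      set K := w.image (fun x => (down x).card) with hK
      have hKcard : K.card = w.card := Finset.card_image_of_injOn hw.card_injOn
      have hbnd : ∀ x : V n (m+1), IsCell n m (down x) → csupp (down x) ⊆ s →
          (down x).card ∈ Finset.Icc 1 s.card := by
        intro x hx hxs
        refine Finset.mem_Icc.mpr ⟨Finset.card_pos.mpr hx.nonempty, ?_⟩
        exact hx.card_le.trans (Finset.card_le_card hxs)
      have hmemw : ∀ x ∈ w, IsCell n m (down x) ∧ csupp (down x) ⊆ s := by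
        intro x hx
        exact ⟨hw.mem_isCell hx, (mem_csupp hx).trans hsub⟩
      have hKsub : K ⊆ Finset.Icc 1 s.card := by
        intro k hk
        simp only [hK, Finset.mem_image] at hk
        obtain ⟨x, hx, rfl⟩ := hk
        exact hbnd x (hmemw x hx).1 (hmemw x hx).2
      have hmiss : (Finset.Icc 1 s.card \ K).card = 1 := by
        rw [Finset.card_sdiff_of_subset hKsub, hKcard, Nat.card_Icc]
        omega
      obtain ⟨cstar, hcstar⟩ := Finset.card_eq_one.mp hmiss
      have hcstar_icc : cstar ∈ Finset.Icc 1 s.card := by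
        have : cstar ∈ Finset.Icc 1 s.card \ K := hcstar ▸ Finset.mem_singleton_self _
        exact (Finset.mem_sdiff.mp this).1
      have hcstar_not : cstar ∉ K := by
        have : cstar ∈ Finset.Icc 1 s.card \ K := hcstar ▸ Finset.mem_singleton_self _
        exact (Finset.mem_sdiff.mp this).2
      have hKmem : ∀ k, k ∈ Finset.Icc 1 s.card → k ≠ cstar → k ∈ K := by
        intro k hk hne
        by_contra hkn
        have : k ∈ Finset.Icc 1 s.card \ K := Finset.mem_sdiff.mpr ⟨hk, hkn⟩
        rw [hcstar] at this
        exact hne (Finset.mem_singleton.mp this)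
      have hKne : ∀ x ∈ w, (down x).card ≠ cstar := by
        intro x hx h
        exact hcstar_not (h ▸ Finset.mem_image_of_mem _ hx)
      have hget : ∀ k ∈ K, ∃ y ∈ w, (down y).card = k := by
        intro k hk
        simpa [hK] using hk
      -- cells obtained by inserting an extension vertex
      set E := Finset.univ.filter (fun x : V n (m+1) => x ∉ w ∧ IsCell n m (down x) ∧
        csupp (down x) ⊆ s ∧ ∀ y ∈ w, down x ⊆ down y ∨ down y ⊆ down x) with hE
      have hEmem : ∀ x : V n (m+1), x ∈ E ↔ x ∉ w ∧ IsCell n m (down x) ∧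
          csupp (down x) ⊆ s ∧ ∀ y ∈ w, down x ⊆ down y ∨ down y ⊆ down x := by
        intro x; simp [hE]
      have hinscell : ∀ x ∈ E, IsCell n (m+1) (insert x w) := by
        intro x hx
        rw [hEmem] at hx
        refine ⟨Finset.insert_nonempty _ _, ?_, ?_⟩
        · intro y hy
          rcases Finset.mem_insert.mp hy with rfl | hy
          · exact hx.2.1
          · exact hw.mem_isCell hy
        · intro y hy z hz
          rcases Finset.mem_insert.mp hy with h1 | h1
          · rcases Finset.mem_insert.mp hz with h2 | h2
            · subst h1; subst h2; exact Or.inl (Finset.Subset.refl _)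
            · subst h1; exact hx.2.2.2 z h2
          · rcases Finset.mem_insert.mp hz with h2 | h2
            · subst h2; exact (hx.2.2.2 y h1).symm
            · exact hw.2.2 y h1 z h2
      have hinsroom : ∀ x ∈ E, insert x w ∈ rooms n (m+1) s ∧ w ⊆ insert x w := by
        intro x hx
        have hx' := (hEmem x).mp hx
        refine ⟨mem_rooms.mpr ⟨hinscell x hx, ?_, ?_⟩, Finset.subset_insert _ _⟩
        · rw [show csupp (insert x w) = vsupp n (m+1) x ⊔ csupp w from Finset.sup_insert]
          exact Finset.union_subset hx'.2.2.1 hsub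
        · rw [Finset.card_insert_of_notMem hx'.1]
          omega
      have himg : (rooms n (m+1) s).filter (fun R => w ⊆ R) =
          E.image (fun x => insert x w) := by
        ext R
        simp only [Finset.mem_filter, Finset.mem_image]
        constructor
        · rintro ⟨hR, hwR⟩
          have hRroom := mem_rooms.mp hR
          have hRd : (R \ w).card = 1 := by
            rw [Finset.card_sdiff_of_subset hwR, hRroom.2.2]
            omega
          obtain ⟨x, hx⟩ := Finset.card_eq_one.mp hRd
          have hxR : x ∈ R ∧ x ∉ w := by
            have : x ∈ R \ w := hx ▸ Finset.mem_singleton_self _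
            exact ⟨(Finset.mem_sdiff.mp this).1, (Finset.mem_sdiff.mp this).2⟩
          have hReq : R = insert x w := by
            ext a
            simp only [Finset.mem_insert]
            constructor
            · intro ha
              by_cases haw : a ∈ w
              · exact Or.inr haw
              · left
                have : a ∈ R \ w := Finset.mem_sdiff.mpr ⟨ha, haw⟩
                rw [hx] at this
                exact Finset.mem_singleton.mp this
            · rintro (rfl | ha)
              · exact hxR.1
              · exact hwR ha
          refine ⟨x, ?_, hReq.symm⟩
          rw [hEmem]
          refine ⟨hxR.2, hRroom.1.mem_isCell hxR.1, ?_, ?_⟩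
          · exact (mem_csupp hxR.1).trans hRroom.2.1
          · intro y hy
            exact hRroom.1.2.2 x hxR.1 y (hwR hy)
        · rintro ⟨x, hx, rfl⟩
          exact ⟨(hinsroom x hx).1, (hinsroom x hx).2⟩
      have hinj : Set.InjOn (fun x => insert x w) E := by
        intro x hx x' hx' h
        have hxw : x ∉ w := ((hEmem x).mp hx).1
        have hx'w : x' ∉ w := ((hEmem x').mp hx').1
        have h2 : insert x w = insert x' w := h
        have : x' ∈ insert x w := h2 ▸ Finset.mem_insert_self x' w
        rcases Finset.mem_insert.mp this with h' | h'
        · exact h'.symm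
        · exact absurd h' hx'w
      have hcount : ((rooms n (m+1) s).filter (fun R => w ⊆ R)).card = E.card := by
        rw [himg, Finset.card_image_of_injOn hinj]
      -- every extension vertex has cardinality cstar
      have hEcard : ∀ x ∈ E, (down x).card = cstar := by
        intro x hx
        have hx' := (hEmem x).mp hx
        have hcell := hinscell x hx
        have himgK : (insert x w).image (fun y => (down y).card) =
            insert ((down x).card) K := by
          rw [hK, Finset.image_insert]
        have hcard2 : (insert ((down x).card) K).card = s.card := by
          rw [← himgK, Finset.card_image_of_injOn hcell.card_injOn,
            Finset.card_insert_of_notMem hx'.1]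
          omega
        have hsubI : insert ((down x).card) K ⊆ Finset.Icc 1 s.card := by
          intro k hk
          rcases Finset.mem_insert.mp hk with rfl | hk
          · exact hbnd x hx'.2.1 hx'.2.2.1
          · exact hKsub hk
        have heqI : insert ((down x).card) K = Finset.Icc 1 s.card := by
          apply Finset.eq_of_subset_of_card_le hsubI
          rw [hcard2, Nat.card_Icc]
          omega
        have : cstar ∈ insert ((down x).card) K := by
          rw [heqI]; exact hcstar_icc
        rcases Finset.mem_insert.mp this with h | h
        · exact h.symm
        · exact absurd h hcstar_not
      by_cases htop : cstar = s.card
      · -- missing top: extensions are rooms of level m over the top wall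
        have hdK : w.card ∈ K := by
          refine hKmem w.card (Finset.mem_Icc.mpr ⟨hd1, by omega⟩) (by omega)
        obtain ⟨a, haw, hacard⟩ := hget _ hdK
        have hamax : ∀ y ∈ w, down y ⊆ down a := by
          intro y hy
          rcases hw.2.2 y hy a haw with h | h
          · exact h
          · have : (down y).card ≤ s.card := (Finset.mem_Icc.mp (hKsub
              (Finset.mem_image_of_mem _ hy))).2
            have hyne := hKne y hy
            have : (down y).card ≤ w.card := by omega
            rw [Finset.eq_of_subset_of_card_le h (by omega)]
        have hcsw : csupp w = csupp (down a) := by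
          refine Finset.Subset.antisymm ?_ (mem_csupp haw)
          exact Finset.le_iff_subset.mp (Finset.sup_le (fun y hy =>
            Finset.le_iff_subset.mpr (vsupp_mono (hamax y hy))))
        have hEdown : E.image down = (rooms n m s).filter (fun R' => down a ⊆ R') := by
          ext R'
          simp only [Finset.mem_image, Finset.mem_filter]
          constructor
          · rintro ⟨x, hx, rfl⟩
            have hx' := (hEmem x).mp hx
            refine ⟨mem_rooms.mpr ⟨hx'.2.1, hx'.2.2.1, by rw [hEcard x hx, htop]⟩, ?_⟩
            rcases hx'.2.2.2 a haw with h | h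
            · have : (down x).card ≤ (down a).card := Finset.card_le_card h
              rw [hEcard x hx, htop] at this
              omega
            · exact h
          · rintro ⟨hR, haR⟩
            have hRroom := mem_rooms.mp hR
            refine ⟨up R', ?_, rfl⟩
            rw [hEmem]
            refine ⟨?_, hRroom.1, hRroom.2.1, ?_⟩
            · intro hmem
              have := hKne _ hmem
              rw [down_up, hRroom.2.2] at this
              exact this htop.symm
            · intro y hy
              rw [down_up]
              exact Or.inr ((hamax y hy).trans haR)
        have : E.card = ((rooms n m s).filter (fun R' => down a ⊆ R')).card := by
          rw [← hEdown, Finset.card_image_of_injOn (fun x _ y _ h => down_injective h)]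
        rw [hcount, this, ih (hw.mem_isCell haw) (hmemw a haw).2 (by omega), hcsw]
      · -- cstar < s.card : two extensions between the neighbours
        have hclt : cstar < s.card := by
          have := (Finset.mem_Icc.mp hcstar_icc).2
          omega
        have hc1 : 1 ≤ cstar := (Finset.mem_Icc.mp hcstar_icc).1
        -- top element exists, so csupp w = s
        have hsK : s.card ∈ K :=
          hKmem s.card (Finset.mem_Icc.mpr ⟨by omega, le_refl _⟩) (by omega)
        obtain ⟨t, htw, htcard⟩ := hget _ hsK
        have hcsuppw : csupp w = s := by
          apply Finset.Subset.antisymm hsub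
          have h1 : vsupp n (m+1) t ⊆ s := (mem_csupp htw).trans hsub
          have h2 : s.card ≤ (vsupp n (m+1) t).card := by
            have := (hw.mem_isCell htw).card_le
            rw [htcard] at this
            exact this
          rw [← Finset.eq_of_subset_of_card_le h1 h2]
          exact mem_csupp htw
        rw [if_pos hcsuppw, hcount]
        -- the upper neighbour b
        have hbK : cstar + 1 ∈ K :=
          hKmem _ (Finset.mem_Icc.mpr ⟨by omega, by omega⟩) (by omega)
        obtain ⟨b, hbw, hbcard⟩ := hget _ hbK
        have hble : ∀ y ∈ w, cstar < (down y).card → down b ⊆ down y := by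
          intro y hy hlt
          rcases hw.2.2 b hbw y hy with h | h
          · exact h
          · have h2 : (down y).card ≤ (down b).card := Finset.card_le_card h
            have := hKne y hy
            have h3 : (down y).card = cstar + 1 := by omega
            rw [Finset.eq_of_subset_of_card_le h (by omega)]
        -- the lower neighbour a (possibly empty)
        have hlower : ∃ a : Finset (V n m), a ⊆ down b ∧ a.card + 1 = cstar ∧
            (∀ y ∈ w, (down y).card < cstar → down y ⊆ a) ∧
            (∀ x : V n (m+1), (∀ y ∈ w, down x ⊆ down y ∨ down y ⊆ down x) →
              (down x).card = cstar → a ⊆ down x) := by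
          by_cases hc1' : cstar = 1
          · refine ⟨∅, Finset.empty_subset _, by simp [hc1'], ?_, ?_⟩
            · intro y hy hlt
              have : 1 ≤ (down y).card := Finset.card_pos.mpr (hw.mem_isCell hy).nonempty
              omega
            · intro x _ _
              exact Finset.empty_subset _
          · have haK : cstar - 1 ∈ K :=
              hKmem _ (Finset.mem_Icc.mpr ⟨by omega, by omega⟩) (by omega)
            obtain ⟨a, haw, hacard⟩ := hget _ haK
            have hab : down a ⊆ down b := by
              rcases hw.2.2 a haw b hbw with h | h
              · exact h
              · have := Finset.card_le_card h
                omega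
            refine ⟨down a, hab, by omega, ?_, ?_⟩
            · intro y hy hlt
              rcases hw.2.2 y hy a haw with h | h
              · exact h
              · have h2 := Finset.card_le_card h
                rw [Finset.eq_of_subset_of_card_le h (by omega)]
            · intro x hcomp hcx
              rcases hcomp a haw with h | h
              · have := Finset.card_le_card h
                omega
              · exact h
        obtain ⟨a, hab, hacard, haup, halow⟩ := hlower
        -- characterisation of E
        have hEchar : ∀ x : V n (m+1), x ∈ E ↔
            a ⊆ down x ∧ down x ⊆ down b ∧ (down x).card = cstar := by
          intro x
          rw [hEmem]
          constructor
          · intro hx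
            have hcx : (down x).card = cstar := hEcard x ((hEmem x).mpr hx)
            refine ⟨halow x hx.2.2.2 hcx, ?_, hcx⟩
            rcases hx.2.2.2 b hbw with h | h
            · exact h
            · have := Finset.card_le_card h
              omega
          · rintro ⟨hax, hxb, hcx⟩
            have hcellb := hw.mem_isCell hbw
            have hxcell : IsCell n m (down x) :=
              hcellb.subset hxb (Finset.card_pos.mp (by omega))
            refine ⟨?_, hxcell, ?_, ?_⟩
            · intro hmem
              exact (hKne x hmem) hcx
            · exact (vsupp_mono hxb).trans ((mem_csupp hbw).trans hsub)
            · intro y hy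
              rcases Nat.lt_trichotomy ((down y).card) cstar with h | h | h
              · exact Or.inr ((haup y hy h).trans hax)
              · exact absurd h (hKne y hy)
              · exact Or.inl (hxb.trans (hble y hy h))
        -- E is in bijection with (down b) \ a
        have hbij : E = ((down b) \ a).image (fun u => up (insert u a)) := by
          ext x
          rw [hEchar]
          simp only [Finset.mem_image]
          constructor
          · rintro ⟨hax, hxb, hcx⟩
            have h1 : ((down x) \ a).card = 1 := by
              rw [Finset.card_sdiff_of_subset hax]
              omega
            obtain ⟨u, hu⟩ := Finset.card_eq_one.mp h1
            have huu : u ∈ down x ∧ u ∉ a := by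
              have : u ∈ down x \ a := hu ▸ Finset.mem_singleton_self _
              exact ⟨(Finset.mem_sdiff.mp this).1, (Finset.mem_sdiff.mp this).2⟩
            refine ⟨u, Finset.mem_sdiff.mpr ⟨hxb huu.1, huu.2⟩, ?_⟩
            refine down_injective ?_
            show insert u a = down x
            ext v
            simp only [Finset.mem_insert]
            constructor
            · rintro (rfl | hv)
              · exact huu.1
              · exact hax hv
            · intro hv
              by_cases hva : v ∈ a
              · exact Or.inr hva
              · left
                have : v ∈ down x \ a := Finset.mem_sdiff.mpr ⟨hv, hva⟩
                rw [hu] at this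
                exact Finset.mem_singleton.mp this
          · rintro ⟨u, hu, rfl⟩
            have hu' := Finset.mem_sdiff.mp hu
            rw [down_up]
            refine ⟨Finset.subset_insert _ _, ?_, ?_⟩
            · exact Finset.insert_subset hu'.1 hab
            · rw [Finset.card_insert_of_notMem hu'.2]
              omega
        rw [hbij, Finset.card_image_of_injOn, Finset.card_sdiff_of_subset hab, hbcard]
        · omega
        · intro u hu u' hu' h
          have h' : insert u a = insert u' a := h
          have hu2 := (Finset.mem_sdiff.mp hu).2
          have hu'2 := (Finset.mem_sdiff.mp hu').2
          have : u' ∈ insert u a := h' ▸ Finset.mem_insert_self u' a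
          rcases Finset.mem_insert.mp this with h'' | h''
          · exact h''.symm
          · exact absurd h'' hu'2

lemma odd_iff_zmod {k : ℕ} : Odd k ↔ (k : ZMod 2) = 1 := by
  rw [Nat.odd_iff]
  constructor
  · intro h
    rw [← ZMod.natCast_mod, h]
    rfl
  · intro h
    by_contra hne
    have h0 : k % 2 = 0 := by omega
    rw [← ZMod.natCast_mod, h0] at h
    exact absurd h (by decide)

lemma isCell_singleton {n m : ℕ} {v : V n m} : IsCell n m {v} ↔ IsVert n m v := by
  cases m with
  | zero => simp [isCell_zero, IsVert]
  | succ m =>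
      constructor
      · intro h
        exact h.2.1 v (Finset.mem_singleton_self v)
      · intro h
        refine ⟨Finset.singleton_nonempty v, ?_, ?_⟩
        · intro x hx
          rw [Finset.mem_singleton.mp hx]
          exact h
        · intro x hx y hy
          rw [Finset.mem_singleton.mp hx, Finset.mem_singleton.mp hy]
          exact Or.inl (Finset.Subset.refl _)

lemma csupp_singleton {n m : ℕ} (v : V n m) : csupp {v} = vsupp n m v := by
  simp [csupp]

/-- Over a singleton face there is exactly one vertex. -/
lemma vert_unique {n : ℕ} : ∀ (m : ℕ) (i : Fin n), ∃! v : V n m,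
    IsVert n m v ∧ vsupp n m v ⊆ {i} := by
  intro m
  induction m with
  | zero =>
      intro i
      refine ⟨i, ⟨trivial, by simp only [vsupp]; exact Finset.Subset.refl _⟩, ?_⟩
      intro v hv
      have : v ∈ vsupp n 0 v := by simp only [vsupp]; exact Finset.mem_singleton_self _
      exact Finset.mem_singleton.mp (hv.2 this)
  | succ m ih =>
      intro i
      obtain ⟨u, hu, huniq⟩ := ih i
      refine ⟨up {u}, ⟨?_, ?_⟩, ?_⟩
      · exact isCell_singleton.mpr hu.1
      · rw [show vsupp n (m+1) (up {u}) = csupp {u} from rfl, csupp_singleton]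
        exact hu.2
      · intro v hv
        have hcell : IsCell n m (down v) := hv.1
        have hvall : ∀ x ∈ down v, x = u := by
          intro x hx
          refine huniq x ⟨hcell.vert_mem hx, ?_⟩
          exact (mem_csupp hx).trans hv.2
        obtain ⟨x, hx⟩ := hcell.nonempty
        have : down v = {u} := by
          apply Finset.eq_singleton_iff_nonempty_unique_mem.mpr
          exact ⟨⟨x, hx⟩, hvall⟩
        exact down_injective (by rw [this, down_up])

open Classical in
/-- Sperner's lemma for the iterated barycentric subdivision. -/
lemma sperner {n : ℕ} (m : ℕ) (col : V n m → Fin n)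
    (hcol : ∀ v, IsVert n m v → col v ∈ vsupp n m v) (s : Finset (Fin n)) :
    s.Nonempty →
    Odd ((rooms n m s).filter (fun R => R.image col = s)).card := by
  classical
  induction s using Finset.strongInduction with
  | _ s IH =>
  intro hs
  by_cases hcard1 : s.card = 1
  · -- base case : single vertex
    obtain ⟨i, rfl⟩ := Finset.card_eq_one.mp hcard1
    obtain ⟨v, hv, hvuniq⟩ := vert_unique m i
    have : (rooms n m {i}).filter (fun R => R.image col = {i}) = {({v} : Finset (V n m))} := by
      ext R
      simp only [Finset.mem_filter, Finset.mem_singleton]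
      constructor
      · rintro ⟨hR, _⟩
        have hRroom := mem_rooms.mp hR
        obtain ⟨u, hu⟩ := Finset.card_eq_one.mp (by rw [hRroom.2.2]; simp)
        subst hu
        have : u = v := by
          refine hvuniq u ⟨hRroom.1.vert_mem (Finset.mem_singleton_self u), ?_⟩
          exact (mem_csupp (Finset.mem_singleton_self u)).trans hRroom.2.1
        rw [this]
      · rintro rfl
        refine ⟨mem_rooms.mpr ⟨isCell_singleton.mpr hv.1, ?_, by simp⟩, ?_⟩
        · rw [csupp_singleton]; exact hv.2
        · have : col v ∈ vsupp n m v := hcol v hv.1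
          have : col v = i := by simpa using hv.2 this
          simp [this]
    rw [this]
    simp
  · -- inductive step
    have hcard2 : 2 ≤ s.card := by
      have := Finset.card_pos.mpr hs
      omega
    obtain ⟨i₀, hi₀⟩ := hs
    set t := s.erase i₀ with ht
    have htcard : t.card + 1 = s.card := by
      rw [ht, Finset.card_erase_of_mem hi₀]
      omega
    have htsub : t ⊆ s := Finset.erase_subset _ _
    have htne : t.Nonempty := Finset.card_pos.mp (by omega)
    have hi₀t : i₀ ∉ t := Finset.notMem_erase _ _
    have hst : s = insert i₀ t := by
      rw [ht, Finset.insert_erase hi₀]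
    set roomsS := rooms n m s with hroomsS
    set tWalls := Finset.univ.filter (fun w : Finset (V n m) => IsCell n m w ∧ csupp w ⊆ s ∧
      w.card + 1 = s.card ∧ w.image col = t) with htW
    have hcolcell : ∀ (c : Finset (V n m)), IsCell n m c → ∀ v ∈ c, col v ∈ csupp c :=
      fun c hc v hv => (mem_csupp hv) (hcol v (hc.vert_mem hv))
    -- per-room wall count equals count of t-walls inside the room
    have hNR : ∀ R ∈ roomsS, (R.filter (fun v => (R.erase v).image col = t)).card
        = (tWalls.filter (fun w => w ⊆ R)).card := by
      intro R hR
      have hRroom := mem_rooms.mp (hroomsS ▸ hR)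
      refine Finset.card_bij (fun v _ => R.erase v) ?_ ?_ ?_
      · intro v hv
        have hv' := Finset.mem_filter.mp hv
        simp only [htW, Finset.mem_filter, Finset.mem_univ, true_and]
        have hvR : v ∈ R := hv'.1
        have hcardE : (R.erase v).card + 1 = s.card := by
          rw [Finset.card_erase_of_mem hvR, hRroom.2.2]
          omega
        refine ⟨⟨?_, ?_, hcardE, hv'.2⟩, Finset.erase_subset _ _⟩
        · refine hRroom.1.subset (Finset.erase_subset _ _) (Finset.card_pos.mp ?_)
          omega
        · exact (vsupp_mono (Finset.erase_subset _ _)).trans hRroom.2.1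
      · intro v hv v' hv' h
        have h' : R.erase v = R.erase v' := h
        by_contra hne
        have hmem : v ∈ R.erase v' := Finset.mem_erase.mpr ⟨hne, (Finset.mem_filter.mp hv).1⟩
        rw [← h'] at hmem
        exact (Finset.notMem_erase v R) hmem
      · intro w hw
        simp only [htW, Finset.mem_filter, Finset.mem_univ, true_and] at hw
        obtain ⟨⟨hwcell, hwsupp, hwcard, hwimg⟩, hwR⟩ := hw
        have hRd : (R \ w).card = 1 := by
          rw [Finset.card_sdiff_of_subset hwR, hRroom.2.2]
          omega
        obtain ⟨v, hv⟩ := Finset.card_eq_one.mp hRd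
        have hvmem : v ∈ R ∧ v ∉ w := by
          have : v ∈ R \ w := hv ▸ Finset.mem_singleton_self _
          exact ⟨(Finset.mem_sdiff.mp this).1, (Finset.mem_sdiff.mp this).2⟩
        have hweq : R.erase v = w := by
          refine (Finset.eq_of_subset_of_card_le ?_ ?_).symm
          · intro u hu
            exact Finset.mem_erase.mpr ⟨fun h => hvmem.2 (h ▸ hu), hwR hu⟩
          · rw [Finset.card_erase_of_mem hvmem.1, hRroom.2.2]
            omega
        refine ⟨v, Finset.mem_filter.mpr ⟨hvmem.1, by rw [hweq]; exact hwimg⟩, hweq⟩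
    -- parity of the per-room count
    have hNRparity : ∀ R ∈ roomsS,
        (((R.filter (fun v => (R.erase v).image col = t)).card : ZMod 2))
          = if R.image col = s then 1 else 0 := by
      intro R hR
      have hRroom := mem_rooms.mp (hroomsS ▸ hR)
      have hcsR : csupp R = s := rooms_csupp (hroomsS ▸ hR)
      have himsub : R.image col ⊆ s := by
        intro j hj
        obtain ⟨v, hv, rfl⟩ := Finset.mem_image.mp hj
        exact hcsR ▸ hcolcell R hRroom.1 v hv
      by_cases hrb : R.image col = s
      · rw [if_pos hrb]
        have hinj : Set.InjOn col R := by
          apply Finset.injOn_of_card_image_eq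
          rw [hrb, hRroom.2.2]
        obtain ⟨v₀, hv₀, hcv₀⟩ := Finset.mem_image.mp (hrb ▸ hi₀)
        have hfeq : R.filter (fun v => (R.erase v).image col = t) = {v₀} := by
          ext v
          simp only [Finset.mem_filter, Finset.mem_singleton]
          constructor
          · rintro ⟨hvR, hvim⟩
            by_contra hne
            have : v₀ ∈ R.erase v := Finset.mem_erase.mpr ⟨fun h => hne h.symm, hv₀⟩
            have : i₀ ∈ (R.erase v).image col :=
              Finset.mem_image.mpr ⟨v₀, this, hcv₀⟩
            rw [hvim] at this
            exact hi₀t this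
          · rintro rfl
            refine ⟨hv₀, ?_⟩
            apply Finset.Subset.antisymm
            · intro j hj
              obtain ⟨u, hu, rfl⟩ := Finset.mem_image.mp hj
              have huR := Finset.mem_of_mem_erase hu
              refine Finset.mem_erase.mpr ⟨?_, himsub (Finset.mem_image_of_mem col huR)⟩
              intro h
              exact (Finset.mem_erase.mp hu).1 (hinj huR hv₀ (h.trans hcv₀.symm))
            · intro j hj
              have hjs : j ∈ s := htsub hj
              obtain ⟨u, hu, rfl⟩ := Finset.mem_image.mp (hrb ▸ hjs)
              refine Finset.mem_image.mpr ⟨u, Finset.mem_erase.mpr ⟨?_, hu⟩, rfl⟩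
              rintro rfl
              exact (Finset.mem_erase.mp hj).1 hcv₀
        rw [hfeq]
        simp
      · rw [if_neg hrb]
        by_cases himt : R.image col = t
        · -- exactly two walls
          have hmapst : ∀ v ∈ R, col v ∈ t := fun v hv => himt ▸ Finset.mem_image_of_mem col hv
          have hlt : t.card < R.card := by
            rw [hRroom.2.2]
            omega
          obtain ⟨v₁, hv₁, v₂, hv₂, hne12, hc12⟩ :=
            Finset.exists_ne_map_eq_of_card_lt_of_maps_to hlt hmapst
          have himgE : (R.erase v₁).image col = t := by
            apply Finset.Subset.antisymm
            · intro j hj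
              obtain ⟨u, hu, rfl⟩ := Finset.mem_image.mp hj
              exact hmapst u (Finset.mem_of_mem_erase hu)
            · intro j hj
              obtain ⟨u, hu, rfl⟩ := Finset.mem_image.mp (himt ▸ hj)
              by_cases huv : u = v₁
              · exact Finset.mem_image.mpr ⟨v₂, Finset.mem_erase.mpr ⟨fun h => hne12 h.symm, hv₂⟩,
                  (huv ▸ hc12 : col u = col v₂).symm ▸ rfl⟩
              · exact Finset.mem_image.mpr ⟨u, Finset.mem_erase.mpr ⟨huv, hu⟩, rfl⟩
          have hinjE : Set.InjOn col (R.erase v₁) := by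
            apply Finset.injOn_of_card_image_eq
            rw [himgE, Finset.card_erase_of_mem hv₁, hRroom.2.2, ← htcard]
            omega
          have hkey : ∀ v ∈ R, ∀ u ∈ R, u ≠ v → col u = col v → v = v₁ ∨ v = v₂ := by
            intro v hv u hu hne hcol'
            by_cases hvv1 : v = v₁
            · exact Or.inl hvv1
            have hvE : v ∈ R.erase v₁ := Finset.mem_erase.mpr ⟨hvv1, hv⟩
            by_cases huv1 : u = v₁
            · subst huv1
              right
              by_contra hvv2
              have hv2E : v₂ ∈ R.erase u := Finset.mem_erase.mpr ⟨fun h => hne12 h.symm, hv₂⟩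
              exact hvv2 (hinjE hvE hv2E (hcol'.symm.trans hc12) )
            · have huE : u ∈ R.erase v₁ := Finset.mem_erase.mpr ⟨huv1, hu⟩
              exact absurd (hinjE huE hvE hcol') hne
          have hfeq : R.filter (fun v => (R.erase v).image col = t) = {v₁, v₂} := by
            ext v
            simp only [Finset.mem_filter, Finset.mem_insert, Finset.mem_singleton]
            constructor
            · rintro ⟨hvR, hvim⟩
              have : col v ∈ (R.erase v).image col := hvim ▸ hmapst v hvR
              obtain ⟨u, hu, hcu⟩ := Finset.mem_image.mp this
              exact hkey v hvR u (Finset.mem_of_mem_erase hu) (Finset.mem_erase.mp hu).1 hcu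
            · intro hv
              have hvR : v ∈ R := by rcases hv with rfl | rfl <;> assumption
              refine ⟨hvR, ?_⟩
              apply Finset.Subset.antisymm
              · intro j hj
                obtain ⟨u, hu, rfl⟩ := Finset.mem_image.mp hj
                exact hmapst u (Finset.mem_of_mem_erase hu)
              · intro j hj
                obtain ⟨u, hu, rfl⟩ := Finset.mem_image.mp (himt ▸ hj)
                by_cases huv : u = v
                · subst huv
                  rcases hv with rfl | rfl
                  · exact Finset.mem_image.mpr ⟨v₂,
                      Finset.mem_erase.mpr ⟨fun h => hne12 h.symm, hv₂⟩, hc12.symm⟩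
                  · exact Finset.mem_image.mpr ⟨v₁,
                      Finset.mem_erase.mpr ⟨hne12, hv₁⟩, hc12⟩
                · exact Finset.mem_image.mpr ⟨u, Finset.mem_erase.mpr ⟨huv, hu⟩, rfl⟩
          rw [hfeq, Finset.card_insert_of_notMem (by simpa using hne12), Finset.card_singleton]
          decide
        · -- no walls at all
          have hfeq : R.filter (fun v => (R.erase v).image col = t) = ∅ := by
            rw [Finset.filter_eq_empty_iff]
            intro v hv him
            have hRins : R = insert v (R.erase v) := (Finset.insert_erase hv).symm
            have : R.image col = insert (col v) t := by
              rw [hRins, Finset.image_insert, him]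
            by_cases hcv : col v ∈ t
            · rw [Finset.insert_eq_self.mpr hcv] at this
              exact himt this
            · have : R.image col = s := by
                rw [this, hst]
                congr 1
                have hcvs : col v ∈ s := himsub (Finset.mem_image_of_mem col hv)
                rw [hst] at hcvs
                rcases Finset.mem_insert.mp hcvs with h | h
                · exact h
                · exact absurd h hcv
              exact hrb this
          rw [hfeq]
          simp
    -- the boundary walls are exactly the rainbow rooms of the face t
    have hbdry : tWalls.filter (fun w => ¬ csupp w = s)
        = (rooms n m t).filter (fun R => R.image col = t) := by
      ext w
      simp only [htW, Finset.mem_filter, Finset.mem_univ, true_and, mem_rooms]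
      constructor
      · rintro ⟨⟨hwcell, hwsupp, hwcard, hwimg⟩, hwne⟩
        have htsubw : t ⊆ csupp w := by
          intro j hj
          obtain ⟨v, hv, rfl⟩ := Finset.mem_image.mp (hwimg ▸ hj)
          exact hcolcell w hwcell v hv
        have hcw : csupp w = t := by
          apply Finset.Subset.antisymm ?_ htsubw
          intro j hj
          have hjs : j ∈ s := hwsupp hj
          rw [hst] at hjs
          rcases Finset.mem_insert.mp hjs with rfl | h
          · exfalso
            apply hwne
            apply Finset.Subset.antisymm hwsupp
            rw [hst]
            exact Finset.insert_subset hj htsubw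
          · exact h
        exact ⟨⟨hwcell, hcw.le, by omega⟩, hwimg⟩
      · rintro ⟨⟨hwcell, hwsupp, hwcard⟩, hwimg⟩
        have hcw : csupp w = t := by
          refine Finset.eq_of_subset_of_card_le hwsupp ?_
          calc t.card = w.card := hwcard.symm
            _ ≤ (csupp w).card := hwcell.card_le
        refine ⟨⟨hwcell, hwsupp.trans htsub, by omega, hwimg⟩, ?_⟩
        rw [hcw]
        intro h
        rw [h] at htcard
        omega
    have hwallparity : ∀ w ∈ tWalls, (((roomsS.filter (fun R => w ⊆ R)).card : ZMod 2))
        = if csupp w = s then 0 else 1 := by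
      intro w hw
      simp only [htW, Finset.mem_filter, Finset.mem_univ, true_and] at hw
      have hwc := wall_count m hw.1 hw.2.1 hw.2.2.1
      rw [hroomsS, hwc]
      by_cases h : csupp w = s
      · rw [if_pos h, if_pos h]; decide
      · rw [if_neg h, if_neg h]; norm_num
    have hswap : ∑ R ∈ roomsS, (tWalls.filter (fun w => w ⊆ R)).card
        = ∑ w ∈ tWalls, (roomsS.filter (fun R => w ⊆ R)).card := by
      simp only [Finset.card_filter]
      exact Finset.sum_comm
    have IHt := IH t (Finset.erase_ssubset hi₀) htne
    rw [odd_iff_zmod] at IHt ⊢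
    calc ((roomsS.filter (fun R => R.image col = s)).card : ZMod 2)
        = ∑ R ∈ roomsS, ((if R.image col = s then 1 else 0) : ZMod 2) :=
          Finset.natCast_card_filter _ _
      _ = ∑ R ∈ roomsS, (((R.filter (fun v => (R.erase v).image col = t)).card : ZMod 2)) :=
          Finset.sum_congr rfl (fun R hR => (hNRparity R hR).symm)
      _ = ∑ R ∈ roomsS, (((tWalls.filter (fun w => w ⊆ R)).card : ZMod 2)) := by
          exact Finset.sum_congr rfl (fun R hR => by rw [hNR R hR])
      _ = ((∑ R ∈ roomsS, (tWalls.filter (fun w => w ⊆ R)).card : ℕ) : ZMod 2) := by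
          push_cast
          rfl
      _ = ((∑ w ∈ tWalls, (roomsS.filter (fun R => w ⊆ R)).card : ℕ) : ZMod 2) := by
          rw [hswap]
      _ = ∑ w ∈ tWalls, (((roomsS.filter (fun R => w ⊆ R)).card : ZMod 2)) := by
          push_cast
          rfl
      _ = ∑ w ∈ tWalls, ((if csupp w = s then 0 else 1) : ZMod 2) :=
          Finset.sum_congr rfl hwallparity
      _ = ∑ w ∈ tWalls, ((if ¬ csupp w = s then 1 else 0) : ZMod 2) := by
          refine Finset.sum_congr rfl (fun w _ => ?_)
          by_cases h : csupp w = s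
          · rw [if_pos h, if_neg (not_not_intro h)]
          · rw [if_neg h, if_pos h]
      _ = ((tWalls.filter (fun w => ¬ csupp w = s)).card : ZMod 2) :=
          (Finset.natCast_card_filter _ _).symm
      _ = (((rooms n m t).filter (fun R => R.image col = t)).card : ZMod 2) := by
          rw [hbdry]
      _ = 1 := IHt

/-! ### Geometric realization -/

noncomputable def realize (n : ℕ) : ∀ m, V n m → (Fin n → ℝ)
  | 0, i => fun j => if j = (id i : Fin n) then 1 else 0
  | m+1, c => (((down c).card : ℝ)⁻¹) • ∑ v ∈ down c, realize n m v

lemma realize_nonneg {n : ℕ} : ∀ (m : ℕ) (v : V n m) (j : Fin n), 0 ≤ realize n m v j := by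
  intro m
  induction m with
  | zero =>
      intro v j
      simp only [realize]
      positivity
  | succ m ih =>
      intro v j
      show 0 ≤ (((down v).card : ℝ)⁻¹) • (∑ u ∈ down v, realize n m u) j
      rw [Finset.sum_apply, smul_eq_mul]
      have : 0 ≤ ∑ u ∈ down v, realize n m u j :=
        Finset.sum_nonneg (fun u _ => ih u j)
      have h2 : (0:ℝ) ≤ ((down v).card : ℝ)⁻¹ := by positivity
      simpa using mul_nonneg h2 this

lemma realize_sum {n : ℕ} : ∀ (m : ℕ) (v : V n m), IsVert n m v →
    ∑ j, realize n m v j = 1 := by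
  intro m
  induction m with
  | zero =>
      intro v _
      simp [realize]
  | succ m ih =>
      intro v hv
      have hne : (down v).Nonempty := (hv : IsCell n m (down v)).nonempty
      have hcard : (((down v).card : ℝ)) ≠ 0 := by
        have := Finset.card_pos.mpr hne
        positivity
      show ∑ j, (((down v).card : ℝ)⁻¹) • (∑ u ∈ down v, realize n m u) j = 1
      simp only [Pi.smul_apply, Finset.sum_apply, smul_eq_mul]
      rw [← Finset.mul_sum, Finset.sum_comm]
      have : ∀ u ∈ down v, ∑ j, realize n m u j = 1 := by
        intro u hu
        exact ih u ((hv : IsCell n m (down v)).vert_mem hu)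
      rw [Finset.sum_congr rfl this]
      simp [hcard]

lemma realize_supp {n : ℕ} : ∀ (m : ℕ) (v : V n m) (j : Fin n),
    j ∉ vsupp n m v → realize n m v j = 0 := by
  intro m
  induction m with
  | zero =>
      intro v j hj
      have : j ≠ v := by simp only [vsupp] at hj; exact fun h => hj (Finset.mem_singleton.mpr h)
      simp only [realize]; exact if_neg this
  | succ m ih =>
      intro v j hj
      show (((down v).card : ℝ)⁻¹) • (∑ u ∈ down v, realize n m u) j = 0
      rw [Finset.sum_apply, smul_eq_mul]
      have : ∀ u ∈ down v, realize n m u j = 0 := by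
        intro u hu
        refine ih u j (fun hmem => hj ?_)
        exact mem_csupp hu hmem
      rw [Finset.sum_congr rfl this]
      simp

lemma realize_mem_stdSimplex {n : ℕ} (m : ℕ) (v : V n m) (hv : IsVert n m v) :
    realize n m v ∈ stdSimplex ℝ (Fin n) :=
  ⟨fun j => realize_nonneg m v j, realize_sum m v hv⟩

/-- Mesh estimate : vertices of a level-`m` cell are `(1-1/n)^m`-close coordinatewise. -/
lemma realize_mesh {n : ℕ} (hn : 0 < n) : ∀ (m : ℕ) (c : Finset (V n m)), IsCell n m c →
    ∀ u ∈ c, ∀ v ∈ c, ∀ j, |realize n m u j - realize n m v j| ≤ (1 - 1/(n:ℝ))^m := by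
  have hq0 : (0:ℝ) ≤ 1 - 1/(n:ℝ) := by
    have : 1/(n:ℝ) ≤ 1 := by
      rw [div_le_one (by positivity)]
      exact_mod_cast hn
    linarith
  intro m
  induction m with
  | zero =>
      intro c _ u _ v _ j
      have h1 : realize n 0 u j ≤ 1 := by
        simp only [realize]
        split <;> norm_num
      have h2 : realize n 0 v j ≤ 1 := by
        simp only [realize]
        split <;> norm_num
      have h3 := realize_nonneg 0 u j
      have h4 := realize_nonneg 0 v j
      rw [pow_zero, abs_le]
      constructor <;> linarith
  | succ m ih =>
      intro c hc u hu v hv j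
      -- the key estimate for nested cells
      have key : ∀ x y : V n (m+1), IsCell n m (down x) → IsCell n m (down y) →
          down x ⊆ down y →
          |realize n (m+1) y j - realize n (m+1) x j| ≤ (1 - 1/(n:ℝ))^(m+1) := by
        intro x y hx hy hxy
        set A := down x with hA
        set B := down y with hB
        have hapos : 0 < A.card := Finset.card_pos.mpr hx.nonempty
        have hbpos : 0 < B.card := Finset.card_pos.mpr hy.nonempty
        have hab : A.card ≤ B.card := Finset.card_le_card hxy
        have hbn : B.card ≤ n := by
          have h1 := hy.card_le
          have h2 : (csupp B).card ≤ n := by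
            have := Finset.card_le_card (Finset.subset_univ (csupp B))
            simpa using this
          omega
        have hra : realize n (m+1) x j = ((A.card : ℝ))⁻¹ * ∑ p ∈ A, realize n m p j := by
          show (((down x).card : ℝ)⁻¹) • (∑ p ∈ down x, realize n m p) j = _
          rw [Finset.sum_apply, smul_eq_mul]
        have hrb : realize n (m+1) y j = ((B.card : ℝ))⁻¹ * ∑ p ∈ B, realize n m p j := by
          show (((down y).card : ℝ)⁻¹) • (∑ p ∈ down y, realize n m p) j = _
          rw [Finset.sum_apply, smul_eq_mul]
        -- the inner bound : each realized vertex of B is close to realize x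
        have hinner : ∀ p ∈ B, |realize n m p j - realize n (m+1) x j| ≤ (1 - 1/(n:ℝ))^m := by
          intro p hp
          have hAne : ((A.card : ℝ)) ≠ 0 := by positivity
          have : realize n m p j - realize n (m+1) x j
              = ((A.card : ℝ))⁻¹ * ∑ q ∈ A, (realize n m p j - realize n m q j) := by
            rw [hra, Finset.sum_sub_distrib, Finset.sum_const, nsmul_eq_mul]
            field_simp
          rw [this, abs_mul, abs_inv, Nat.abs_cast]
          calc ((A.card : ℝ))⁻¹ * |∑ q ∈ A, (realize n m p j - realize n m q j)|
              ≤ ((A.card : ℝ))⁻¹ * ∑ q ∈ A, |realize n m p j - realize n m q j| := by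
                refine mul_le_mul_of_nonneg_left (Finset.abs_sum_le_sum_abs _ _) (by positivity)
            _ ≤ ((A.card : ℝ))⁻¹ * ∑ q ∈ A, (1 - 1/(n:ℝ))^m := by
                refine mul_le_mul_of_nonneg_left (Finset.sum_le_sum ?_) (by positivity)
                intro q hq
                exact ih B hy p hp q (hxy hq) j
            _ = ((A.card : ℝ))⁻¹ * (A.card * (1 - 1/(n:ℝ))^m) := by
                rw [Finset.sum_const, nsmul_eq_mul]
            _ = (1 - 1/(n:ℝ))^m := by
                rw [← mul_assoc, inv_mul_cancel₀ (by positivity), one_mul]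
        -- split off A from B
        have hBne : ((B.card : ℝ)) ≠ 0 := by positivity
        have hAne : ((A.card : ℝ)) ≠ 0 := by positivity
        have hsa : ∑ p ∈ A, realize n m p j = A.card * realize n (m+1) x j := by
          rw [hra, ← mul_assoc, mul_inv_cancel₀ hAne, one_mul]
        have hcd : ((B \ A).card : ℝ) = (B.card : ℝ) - (A.card : ℝ) := by
          rw [Finset.card_sdiff_of_subset hxy]
          push_cast [hab]
          ring
        have hsplit : realize n (m+1) y j - realize n (m+1) x j
            = ((B.card : ℝ))⁻¹ * ∑ p ∈ B \ A, (realize n m p j - realize n (m+1) x j) := by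
          rw [hrb, Finset.sum_sub_distrib, Finset.sum_const, nsmul_eq_mul, hcd,
            ← Finset.sum_sdiff hxy, hsa]
          field_simp
          ring
        rw [hsplit, abs_mul, abs_inv, Nat.abs_cast]
        calc ((B.card : ℝ))⁻¹ * |∑ p ∈ B \ A, (realize n m p j - realize n (m+1) x j)|
            ≤ ((B.card : ℝ))⁻¹ * ∑ p ∈ B \ A, |realize n m p j - realize n (m+1) x j| := by
              refine mul_le_mul_of_nonneg_left (Finset.abs_sum_le_sum_abs _ _) (inv_nonneg.mpr (Nat.cast_nonneg _))
          _ ≤ ((B.card : ℝ))⁻¹ * ∑ p ∈ B \ A, (1 - 1/(n:ℝ))^m := by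
              refine mul_le_mul_of_nonneg_left (Finset.sum_le_sum ?_) (inv_nonneg.mpr (Nat.cast_nonneg _))
              intro p hp
              exact hinner p (Finset.mem_sdiff.mp hp).1
          _ = ((B \ A).card : ℝ) / (B.card : ℝ) * (1 - 1/(n:ℝ))^m := by
              rw [Finset.sum_const, nsmul_eq_mul]
              ring
          _ ≤ (1 - 1/(n:ℝ)) * (1 - 1/(n:ℝ))^m := by
              refine mul_le_mul_of_nonneg_right ?_ (by positivity)
              rw [Finset.card_sdiff_of_subset hxy, div_le_iff₀ (by exact_mod_cast hbpos)]
              have h1 : ((B.card - A.card : ℕ) : ℝ) = (B.card : ℝ) - A.card := by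
                push_cast [hab]
                ring
              rw [h1]
              have h2 : (1:ℝ) ≤ A.card := by exact_mod_cast hapos
              have h3 : (B.card : ℝ) * (1/(n:ℝ)) ≤ 1 := by
                rw [mul_one_div, div_le_one (by positivity)]
                exact_mod_cast hbn
              have : (1 - 1/(n:ℝ)) * B.card = B.card - B.card * (1/(n:ℝ)) := by ring
              rw [this]
              linarith
          _ = (1 - 1/(n:ℝ))^(m+1) := by rw [pow_succ]; ring
      -- now conclude by comparability
      rcases hc.2.2 u hu v hv with hcomp | hcomp
      · rw [abs_sub_comm]
        exact key u v (hc.mem_isCell hu) (hc.mem_isCell hv) hcomp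
      · exact key v u (hc.mem_isCell hv) (hc.mem_isCell hu) hcomp

/-! ### Brouwer fixed point theorem for the standard simplex -/

open Classical in
theorem brouwer_stdSimplex {n : ℕ} (hn : 0 < n) {g : (Fin n → ℝ) → (Fin n → ℝ)}
    (hg : ContinuousOn g (stdSimplex ℝ (Fin n)))
    (hmap : Set.MapsTo g (stdSimplex ℝ (Fin n)) (stdSimplex ℝ (Fin n))) :
    ∃ x ∈ stdSimplex ℝ (Fin n), g x = x := by
  classical
  haveI : Nonempty (Fin n) := ⟨⟨0, hn⟩⟩
  set Δ := stdSimplex ℝ (Fin n) with hΔ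
  -- existence of a good colour at every point of the simplex
  have hgood : ∀ x ∈ Δ, ∃ i, 0 < x i ∧ g x i ≤ x i := by
    intro x hx
    by_contra hno
    push_neg at hno
    set P := Finset.univ.filter (fun i => 0 < x i) with hP
    have hx2 : ∑ j, x j = 1 := hx.2
    have hPsum : ∑ i ∈ P, x i = 1 := by
      rw [← hx2]
      refine Finset.sum_subset (Finset.filter_subset _ _) ?_
      intro i _ hiP
      have : ¬ 0 < x i := by simpa [hP] using hiP
      have := hx.1 i
      linarith
    have hPne : P.Nonempty := by
      by_contra hPe
      rw [Finset.not_nonempty_iff_eq_empty] at hPe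
      rw [hPe, Finset.sum_empty] at hPsum
      norm_num at hPsum
    have hgx := hmap hx
    have hlt : ∑ i ∈ P, x i < ∑ i ∈ P, g x i := by
      refine Finset.sum_lt_sum_of_nonempty hPne ?_
      intro i hi
      have h0 : 0 < x i := by simpa [hP] using hi
      exact hno i h0
    have hle2 : ∑ i ∈ P, g x i ≤ 1 := by
      rw [← hgx.2]
      refine Finset.sum_le_sum_of_subset_of_nonneg (Finset.subset_univ _) ?_
      intro i _ _
      exact hgx.1 i
    rw [hPsum] at hlt
    linarith
  -- approximate fixed points
  have key : ∀ ε : ℝ, 0 < ε → ∃ x ∈ Δ, ∀ i, g x i ≤ x i + ε := by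
    intro ε hε
    -- uniform continuity
    have hUC : UniformContinuousOn g Δ :=
      IsCompact.uniformContinuousOn_of_continuous (isCompact_stdSimplex _ _) hg
    rw [Metric.uniformContinuousOn_iff] at hUC
    obtain ⟨δ, hδ, hδ2⟩ := hUC (ε/2) (by positivity)
    -- a fine subdivision level
    have hq1 : 1 - 1/(n:ℝ) < 1 := by
      have : 0 < 1/(n:ℝ) := by positivity
      linarith
    have hq0 : 0 ≤ 1 - 1/(n:ℝ) := by
      have : 1/(n:ℝ) ≤ 1 := by
        rw [div_le_one (by positivity)]
        exact_mod_cast hn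
      linarith
    obtain ⟨m, hm⟩ := exists_pow_lt_of_lt_one (lt_min hδ (by positivity : (0:ℝ) < ε/2)) hq1
    have hmδ : (1 - 1/(n:ℝ))^m < δ := lt_of_lt_of_le hm (min_le_left _ _)
    have hmε : (1 - 1/(n:ℝ))^m < ε/2 := lt_of_lt_of_le hm (min_le_right _ _)
    -- the colouring
    set col : V n m → Fin n := fun v =>
      if h : ∃ i, 0 < realize n m v i ∧ g (realize n m v) i ≤ realize n m v i
      then h.choose else ⟨0, hn⟩ with hcoldef
    have hcolspec : ∀ v : V n m, IsVert n m v →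
        0 < realize n m v (col v) ∧ g (realize n m v) (col v) ≤ realize n m v (col v) := by
      intro v hv
      have hx := realize_mem_stdSimplex m v hv
      have h := hgood _ hx
      rw [hcoldef]
      simp only [dif_pos h]
      exact h.choose_spec
    have hcolmem : ∀ v : V n m, IsVert n m v → col v ∈ vsupp n m v := by
      intro v hv
      by_contra hns
      have := realize_supp m v (col v) hns
      have := (hcolspec v hv).1
      linarith
    -- a rainbow room
    have hodd := sperner m col hcolmem Finset.univ Finset.univ_nonempty
    have hne : ((rooms n m Finset.univ).filter
        (fun R => R.image col = Finset.univ)).Nonempty := by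
      rw [← Finset.card_pos]
      rcases hodd with ⟨j, hj⟩
      omega
    obtain ⟨R, hR⟩ := hne
    rw [Finset.mem_filter] at hR
    have hRroom := mem_rooms.mp hR.1
    obtain ⟨u₀, hu₀⟩ := hRroom.1.nonempty
    set x₀ := realize n m u₀ with hx₀
    have hx₀Δ : x₀ ∈ Δ := realize_mem_stdSimplex m u₀ (hRroom.1.vert_mem hu₀)
    refine ⟨x₀, hx₀Δ, ?_⟩
    intro i
    -- find the vertex coloured i
    have : i ∈ R.image col := by rw [hR.2]; exact Finset.mem_univ i
    obtain ⟨v, hvR, hcv⟩ := Finset.mem_image.mp this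
    set xv := realize n m v with hxv
    have hxvΔ : xv ∈ Δ := realize_mem_stdSimplex m v (hRroom.1.vert_mem hvR)
    have hspec := hcolspec v (hRroom.1.vert_mem hvR)
    rw [hcv] at hspec
    -- mesh bound
    have hdist : dist x₀ xv ≤ (1 - 1/(n:ℝ))^m := by
      rw [dist_pi_le_iff (by positivity)]
      intro j
      rw [Real.dist_eq]
      exact realize_mesh hn m R hRroom.1 u₀ hu₀ v hvR j
    have hgdist : dist (g x₀) (g xv) < ε/2 :=
      hδ2 x₀ hx₀Δ xv hxvΔ (lt_of_le_of_lt hdist hmδ)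
    have hcoord : |g x₀ i - g xv i| < ε/2 := by
      have := dist_le_pi_dist (g x₀) (g xv) i
      rw [Real.dist_eq] at this
      linarith
    have hvcoord : |xv i - x₀ i| ≤ (1 - 1/(n:ℝ))^m := by
      rw [abs_sub_comm]
      exact realize_mesh hn m R hRroom.1 u₀ hu₀ v hvR i
    have h1 : g x₀ i ≤ g xv i + ε/2 := by
      have := abs_le.mp hcoord.le
      linarith
    have h2 : xv i ≤ x₀ i + (1 - 1/(n:ℝ))^m := by
      have := abs_le.mp hvcoord
      linarith
    calc g x₀ i ≤ g xv i + ε/2 := h1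
      _ ≤ xv i + ε/2 := by linarith [hspec.2]
      _ ≤ x₀ i + (1 - 1/(n:ℝ))^m + ε/2 := by linarith
      _ ≤ x₀ i + ε := by linarith
  -- extract a convergent subsequence of approximate fixed points
  have hxseq : ∀ k : ℕ, ∃ x ∈ Δ, ∀ i, g x i ≤ x i + 1/(k+1 : ℝ) := by
    intro k
    exact key _ (by positivity)
  choose x hxΔ hxappr using hxseq
  obtain ⟨a, haΔ, φ, hφ, hconv⟩ := (isCompact_stdSimplex ℝ (Fin n)).tendsto_subseq hxΔ
  have hgtend : Filter.Tendsto (fun k => g (x (φ k))) Filter.atTop (nhds (g a)) := by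
    have hga : Filter.Tendsto g (nhdsWithin a Δ) (nhds (g a)) := hg a haΔ
    refine hga.comp ?_
    rw [tendsto_nhdsWithin_iff]
    exact ⟨hconv, Filter.Eventually.of_forall (fun k => hxΔ _)⟩
  have hle : ∀ i, g a i ≤ a i := by
    intro i
    have h1 : Filter.Tendsto (fun k => g (x (φ k)) i) Filter.atTop (nhds (g a i)) :=
      (tendsto_pi_nhds.mp hgtend) i
    have h2 : Filter.Tendsto (fun k => x (φ k) i + 1/(k+1 : ℝ)) Filter.atTop
        (nhds (a i + 0)) :=
      ((tendsto_pi_nhds.mp hconv) i).add tendsto_one_div_add_atTop_nhds_zero_nat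
    rw [add_zero] at h2
    refine le_of_tendsto_of_tendsto' h1 h2 ?_
    intro k
    have hk : (k:ℝ) + 1 ≤ (φ k : ℝ) + 1 := by
      have hk0 : k ≤ φ k := hφ.le_apply
      have : (k:ℝ) ≤ (φ k : ℝ) := by exact_mod_cast hk0
      linarith
    have : 1/((φ k : ℝ)+1) ≤ 1/((k:ℝ)+1) :=
      one_div_le_one_div_of_le (by positivity) hk
    have := hxappr (φ k) i
    linarith
  refine ⟨a, haΔ, ?_⟩
  funext i
  by_contra hne
  have hlt : g a i < a i := lt_of_le_of_ne (hle i) hne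
  have : ∑ j, g a j < ∑ j, a j :=
    Finset.sum_lt_sum (fun j _ => hle j) ⟨i, Finset.mem_univ i, hlt⟩
  rw [(hmap haΔ).2, haΔ.2] at this
  exact lt_irrefl 1 this

end SpernerAux

/-- Deterministic core of Theorem 2: a correspondence with nonempty convex values and
the local intersection property on a compact convex subset of a metrizable locally
convex space has a fixed point. -/
theorem local_intersection_fixed_point
    {X : Type*} [MetricSpace X] [AddCommGroup X] [Module ℝ X]
    [IsTopologicalAddGroup X] [ContinuousSMul ℝ X] [LocallyConvexSpace ℝ X]
    (C : Set X) (hCne : C.Nonempty) (hCcomp : IsCompact C) (hCconv : Convex ℝ C)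
    (T : X → Set X)
    (hvals : ∀ x ∈ C, (T x).Nonempty ∧ Convex ℝ (T x) ∧ T x ⊆ C)
    (hlip : ∀ x ∈ C, ∃ V : Set X, IsOpen V ∧ x ∈ V ∧ (⋂ z ∈ V ∩ C, T z).Nonempty) :
    ∃ x₀ ∈ C, x₀ ∈ T x₀ := by
  classical
  -- shrink the neighbourhoods to balls
  have hVy : ∀ x ∈ C, ∃ (r : ℝ) (y : X), 0 < r ∧ ∀ z ∈ Metric.ball x r ∩ C, y ∈ T z := by
    intro x hx
    obtain ⟨V, hVopen, hxV, ⟨y, hy⟩⟩ := hlip x hx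
    obtain ⟨r, hr, hball⟩ := Metric.isOpen_iff.mp hVopen x hxV
    refine ⟨r, y, hr, ?_⟩
    intro z hz
    simp only [Set.mem_iInter] at hy
    exact hy z ⟨hball hz.1, hz.2⟩
  choose! r y hr hy using hVy
  -- finite subcover
  have hcov : C ⊆ ⋃ x : C, Metric.ball (x : X) (r x) := by
    intro z hz
    exact Set.mem_iUnion.mpr ⟨⟨z, hz⟩, Metric.mem_ball_self (hr z hz)⟩
  obtain ⟨t, ht⟩ := hCcomp.elim_finite_subcover _ (fun x : C => Metric.isOpen_ball) hcov
  set n := t.card with hn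
  have hn0 : 0 < n := by
    obtain ⟨z, hz⟩ := hCne
    obtain ⟨x, hx, _⟩ := Set.mem_iUnion₂.mp (ht hz)
    rw [hn]
    exact Finset.card_pos.mpr ⟨x, hx⟩
  set pt : Fin n → X := fun i => ((t.equivFin.symm i : C) : X) with hpt
  have hptC : ∀ i, pt i ∈ C := fun i => (t.equivFin.symm i : C).2
  set ρ : Fin n → ℝ := fun i => r (pt i) with hρ
  set yy : Fin n → X := fun i => y (pt i) with hyy
  have hρpos : ∀ i, 0 < ρ i := fun i => hr _ (hptC i)
  have hyT : ∀ i, ∀ z ∈ Metric.ball (pt i) (ρ i) ∩ C, yy i ∈ T z :=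
    fun i => hy _ (hptC i)
  have hyC : ∀ i, yy i ∈ C := by
    intro i
    have := hyT i (pt i) ⟨Metric.mem_ball_self (hρpos i), hptC i⟩
    exact (hvals _ (hptC i)).2.2 this
  have hcov' : ∀ z ∈ C, ∃ i, dist z (pt i) < ρ i := by
    intro z hz
    obtain ⟨x, hxt, hxz⟩ := Set.mem_iUnion₂.mp (ht hz)
    refine ⟨t.equivFin ⟨x, hxt⟩, ?_⟩
    have hpteq : pt (t.equivFin ⟨x, hxt⟩) = (x : X) := by
      simp only [hpt, Equiv.symm_apply_apply]
    rw [hρ]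
    simp only [hpteq]
    exact Metric.mem_ball.mp hxz
  -- the partition functions
  set d : Fin n → X → ℝ := fun i z => max (ρ i - dist z (pt i)) 0 with hd
  have hdnonneg : ∀ i z, 0 ≤ d i z := fun i z => le_max_right _ _
  have hdpos : ∀ i z, dist z (pt i) < ρ i → 0 < d i z := by
    intro i z h
    rw [hd]
    simp only [lt_max_iff]
    left
    linarith
  have hdpos' : ∀ i z, 0 < d i z → z ∈ Metric.ball (pt i) (ρ i) := by
    intro i z h
    rw [hd] at h
    simp only [lt_max_iff, lt_irrefl, or_false] at h
    rw [Metric.mem_ball]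
    linarith
  have hdcont : ∀ i, Continuous (fun z => d i z) := by
    intro i
    exact (continuous_const.sub (continuous_id.dist continuous_const)).max continuous_const
  set S : X → ℝ := fun z => ∑ i, d i z with hS
  have hScont : Continuous S := continuous_finset_sum _ (fun i _ => hdcont i)
  have hSpos : ∀ z ∈ C, 0 < S z := by
    intro z hz
    obtain ⟨i, hi⟩ := hcov' z hz
    exact Finset.sum_pos' (fun j _ => hdnonneg j z) ⟨i, Finset.mem_univ i, hdpos i z hi⟩
  -- the barycentric map into C
  set p : (Fin n → ℝ) → X := fun lam => ∑ i, lam i • yy i with hp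
  have hpcont : Continuous p :=
    continuous_finset_sum _ (fun i _ => (continuous_apply i).smul continuous_const)
  have hpC : ∀ lam ∈ stdSimplex ℝ (Fin n), p lam ∈ C := by
    intro lam hlam
    exact hCconv.sum_mem (fun i _ => hlam.1 i) hlam.2 (fun i _ => hyC i)
  -- the induced self-map of the simplex
  set G : (Fin n → ℝ) → (Fin n → ℝ) := fun lam i => d i (p lam) / S (p lam) with hG
  have hGcont : ContinuousOn G (stdSimplex ℝ (Fin n)) := by
    rw [continuousOn_pi]
    intro i
    refine ContinuousOn.div ((hdcont i).comp hpcont).continuousOn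
      (hScont.comp hpcont).continuousOn ?_
    intro lam hlam
    exact ne_of_gt (hSpos _ (hpC lam hlam))
  have hGmaps : Set.MapsTo G (stdSimplex ℝ (Fin n)) (stdSimplex ℝ (Fin n)) := by
    intro lam hlam
    have hSp := hSpos _ (hpC lam hlam)
    constructor
    · intro i
      exact div_nonneg (hdnonneg i _) hSp.le
    · rw [← Finset.sum_div]
      exact div_self (ne_of_gt hSp)
  obtain ⟨lam, hlam, hfix⟩ := SpernerAux.brouwer_stdSimplex hn0 hGcont hGmaps
  set x₀ := p lam with hx₀
  have hx₀C : x₀ ∈ C := hpC lam hlam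
  have hsupp : ∀ i, lam i ≠ 0 → yy i ∈ T x₀ := by
    intro i hi
    have hlami : lam i = d i x₀ / S x₀ := by
      conv_lhs => rw [← hfix]
    have hdi : 0 < d i x₀ := by
      rcases lt_or_eq_of_le (hdnonneg i x₀) with h | h
      · exact h
      · exfalso
        apply hi
        rw [hlami, ← h, zero_div]
    exact hyT i x₀ ⟨hdpos' i x₀ hdi, hx₀C⟩
  -- x₀ is the convex combination of the yy i with positive weight
  refine ⟨x₀, hx₀C, ?_⟩
  have hTconv : Convex ℝ (T x₀) := (hvals _ hx₀C).2.1
  have hsum : ∑ i ∈ Finset.univ.filter (fun i => lam i ≠ 0), lam i • yy i = x₀ := by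
    rw [hx₀, hp]
    refine Finset.sum_filter_of_ne ?_
    intro i _ h hlam0
    apply h
    rw [hlam0, zero_smul]
  have hwsum : ∑ i ∈ Finset.univ.filter (fun i => lam i ≠ 0), lam i = 1 := by
    rw [Finset.sum_filter_ne_zero]
    exact hlam.2
  have hmem := hTconv.sum_mem (t := Finset.univ.filter (fun i => lam i ≠ 0))
    (fun i _ => hlam.1 i) hwsum
    (fun i hi => hsupp i (Finset.mem_filter.mp hi).2)
  rwa [hsum] at hmem
end

section
/- Let C be a nonempty closed subset of a metric space X and T : Ω × C → 2^X. For a closed ball B₀ ⊆ C define L(B₀) = ⋂_{k=1}^∞ ⋃_{z ∈ B(B₀;1/k)} {ω ∈ Ω : d(z, T(ω, z)) < 1/k}. Suppose for each ω: (i) T(ω,·) satisfies condition (P); and (ii) whenever x₀ ∈ B₀ and x₀ ∈ T(ω, x₀), for every n there exists xₙ ∈ B(B₀; 1/n) with d(xₙ, T(ω, xₙ)) < 1/n (condition (*)). Then {ω : ∃ x ∈ B₀, x ∈ T(ω, x)} = L(B₀). -/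
open Metric

/-- The key measurability identity: under conditions (P) and (*), the set of `ω` for
which `T(ω, ·)` has a fixed point in the closed ball `B₀` equals
`L(B₀) = ⋂_k ⋃_{z ∈ B(B₀;1/k)} {ω : d(z, T ω z) < 1/k}`. -/
theorem fixed_point_set_eq_L
    {Ω : Type*} {X : Type*} [MetricSpace X]
    (C : Set X) (hne : C.Nonempty) (hcl : IsClosed C)
    (T : Ω → X → Set X)
    (c : X) (hc : c ∈ C) (r : ℝ) (hr : 0 ≤ r)
    -- condition (P) for each ω
    (hP : ∀ ω : Ω, ∀ (c' : X), c' ∈ C → ∀ (r' : ℝ), 0 ≤ r' →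
      ∀ x : ℕ → X, (∀ n, x n ∈ C) →
        Filter.Tendsto (fun n => infDist (x n) (closedBall c' r' ∩ C)) Filter.atTop (nhds 0) →
        Filter.Tendsto (fun n => infDist (x n) (T ω (x n))) Filter.atTop (nhds 0) →
        ∃ x₀ ∈ closedBall c' r' ∩ C, x₀ ∈ T ω x₀)
    -- condition (*) for each ω, for the ball B₀ = closedBall c r ∩ C
    (hstar : ∀ ω : Ω, ∀ x₀ ∈ closedBall c r ∩ C, x₀ ∈ T ω x₀ →
      ∀ n : ℕ, 0 < n → ∃ x ∈ C,
        infDist x (closedBall c r ∩ C) < 1 / n ∧ infDist x (T ω x) < 1 / n) :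
    {ω : Ω | ∃ x ∈ closedBall c r ∩ C, x ∈ T ω x} =
      ⋂ (k : ℕ) (_ : 0 < k),
        ⋃ z ∈ {y ∈ C | infDist y (closedBall c r ∩ C) < 1 / k},
          {ω : Ω | infDist z (T ω z) < 1 / k} := by
  ext ω
  simp only [Set.mem_setOf_eq, Set.mem_iInter, Set.mem_iUnion, Set.mem_sep_iff]
  constructor
  · rintro ⟨x₀, hx₀, hfix⟩ k hk
    obtain ⟨z, hzC, h1, h2⟩ := hstar ω x₀ hx₀ hfix k hk
    exact ⟨z, ⟨hzC, h1⟩, h2⟩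
  · intro h
    choose z hz hd using fun k (hk : 0 < k) => h k hk
    set x : ℕ → X := fun n => z (n + 1) (Nat.succ_pos n) with hx
    have hbound : Filter.Tendsto (fun n : ℕ => (1 : ℝ) / (n + 1)) Filter.atTop (nhds 0) :=
      tendsto_one_div_add_atTop_nhds_zero_nat
    have h1 : Filter.Tendsto (fun n => infDist (x n) (closedBall c r ∩ C))
        Filter.atTop (nhds 0) := by
      apply squeeze_zero (fun n => infDist_nonneg) (fun n => ?_) hbound
      have := (hz (n + 1) (Nat.succ_pos n)).2
      push_cast at this
      exact this.le
    have h2 : Filter.Tendsto (fun n => infDist (x n) (T ω (x n)))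
        Filter.atTop (nhds 0) := by
      apply squeeze_zero (fun n => infDist_nonneg) (fun n => ?_) hbound
      have := hd (n + 1) (Nat.succ_pos n)
      push_cast at this
      exact this.le
    exact hP ω c hc r hr x (fun n => (hz (n + 1) (Nat.succ_pos n)).1) h1 h2
end
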